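/- arXiv:1105.0457 — 4 statements merged into one kernel-verified Lean document; each statement's English description precedes it below -/
import Mathlib

section
/- Let M be an ergodic time-reversible Markov chain on a finite state space Ω with transition matrix P and stationary distribution π, with eigenvalues 1 = λ_0 > λ_1 ≥ ... ≥ λ_{N−1} ≥ −1 where N = |Ω|. For each x ∈ Ω fix a closed walk σ_x from x to x of odd length in the underlying graph 𝒢 of the chain, let Σ = {σ_x : x ∈ Ω}, and let η = η(Σ) = max_{e∈Γ} (1/Q(e)) · ∑_{x∈Ω, e∈σ_x} |σ_x|·π(x). Then (1 + λ_{N−1})^{-1} ≤ η/2. -/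
attribute [local instance] Classical.propDecidable

/-- The walk (given as its list of vertices) `p` uses the undirected edge `{a,b}`:
`a, b` occur consecutively in `p` in either order. -/
def WalkUses {Ω : Type*} (p : List Ω) (a b : Ω) : Prop :=
  (∃ l₁ l₂, p = l₁ ++ a :: b :: l₂) ∨ (∃ l₁ l₂, p = l₁ ++ b :: a :: l₂)

/-!
For an eigenvector `ψ` with eigenvalue `λ`, reversibility gives
`∑ x y, π x P x y (ψ x + ψ y)² = 2 (1 + λ) ∑ x, π x ψ x²`. Along a closed walk
`x = u₀, …, uₙ = x` of odd length `n` the alternating sum `∑ᵢ (-1)ⁱ (ψ uᵢ + ψ uᵢ₊₁)`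
telescopes to `2 ψ x`, so Cauchy–Schwarz gives `4 ψ x² ≤ n ∑ᵢ (ψ uᵢ + ψ uᵢ₊₁)²`. Weighting by
`π x`, summing over `x` and exchanging the order of summation bounds `4 ∑ x, π x ψ x²` by `η`
times the left-hand side above.

Since `η` counts each edge once per walk, `σ x` is first replaced by a walk without repeated
steps: if a step `a → b` occurs twice, traversing the part of the walk between the two
occurrences backwards removes two steps and keeps the endpoints, the parity and the edge set.
-/

open Finset

lemma sub_sq_le_of_sq_le {n s a d : ℝ} (hn : 0 ≤ n) (hs : 0 ≤ s) (h : a ^ 2 ≤ n * s) :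
    (d - a) ^ 2 ≤ (n + 1) * (d ^ 2 + s) := by
  rcases hn.eq_or_lt with rfl | hn
  · nlinarith
  · nlinarith [sq_nonneg (n * d + a), mul_nonneg (by linarith : (0 : ℝ) ≤ n + 1) (sub_nonneg.2 h)]

section Walks

variable {α : Type*} {R : α → α → Prop}

lemma mem_consecutivePairs_iff {l : List α} {a b : α} :
    (a, b) ∈ l.consecutivePairs ↔ ∃ l₁ l₂, l = l₁ ++ a :: b :: l₂ := by
  induction l with
  | nil => simp
  | cons c l ih =>
    cases l with
    | nil =>
      simp only [List.consecutivePairs, List.tail_cons, List.zip_nil_right, List.not_mem_nil,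
        false_iff, not_exists]
      intro l₁ l₂ h
      have := congrArg List.length h
      simp at this
      omega
    | cons d m =>
      rw [show (c :: d :: m).consecutivePairs = (c, d) :: (d :: m).consecutivePairs from rfl,
        List.mem_cons, ih]
      constructor
      · rintro (h | ⟨l₁, l₂, h⟩)
        · obtain ⟨rfl, rfl⟩ := Prod.mk.inj h
          exact ⟨[], m, rfl⟩
        · exact ⟨c :: l₁, l₂, by simp [h]⟩
      · rintro ⟨_ | ⟨_, l₁⟩, l₂, h⟩
        · simp_all
        · simp only [List.cons_append, List.cons.injEq] at h
          exact Or.inr ⟨l₁, l₂, h.2⟩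

lemma exists_shorter_of_not_nodup_consecutivePairs (hR : ∀ {a b}, R a b → R b a) :
    ∀ {l : List α}, l.IsChain R → ¬ l.consecutivePairs.Nodup →
      ∃ l' : List α, l'.IsChain R ∧ l'.head? = l.head? ∧ l'.getLast? = l.getLast? ∧
        l'.length + 2 = l.length
  | [], _, h => absurd List.nodup_nil h
  | [_], _, h => absurd List.nodup_nil h
  | c :: d :: m, hl, h => by
    rw [show (c :: d :: m).consecutivePairs = (c, d) :: (d :: m).consecutivePairs from rfl,
      List.nodup_cons, not_and_or, not_not] at h
    rcases h with hcd | h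
    · obtain ⟨_ | ⟨_, W⟩, l₂, hm⟩ := mem_consecutivePairs_iff.1 hcd
      · obtain ⟨rfl, rfl⟩ := List.cons.inj hm
        exact ⟨d :: l₂, hl.tail.tail, rfl, by simp [List.getLast?_cons], by simp⟩
      · obtain ⟨rfl, rfl⟩ := List.cons.inj hm
        -- the closed walk `d, W, c` between the two steps `c → d` is traversed backwards
        have hloop : (d :: W ++ [c]).IsChain R := hl.infix ⟨[c], d :: l₂, by simp⟩
        have hback : (c :: W.reverse ++ [d]).IsChain R := by
          simpa using List.isChain_reverse.2 (hloop.imp fun _ _ h => hR h)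
        have htail : ([d] ++ l₂).IsChain R := hl.infix ⟨c :: d :: W ++ [c], [], by simp⟩
        refine ⟨c :: (W.reverse ++ d :: l₂), ?_, rfl, ?_, by simp; omega⟩
        · simpa using hback.append_overlap htail (by simp)
        · simp [List.getLast?_cons, List.getLast?_append]
    · obtain ⟨l', hc, hh, hlast, hlen⟩ :=
        exists_shorter_of_not_nodup_consecutivePairs hR hl.tail h
      refine ⟨c :: l', hc.cons ?_, rfl, by simp [List.getLast?_cons, hlast], ?_⟩
      · rw [hh]
        simpa using (List.isChain_cons_cons.1 hl).1
      · simp only [List.tail_cons, List.length_cons] at hlen ⊢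
        omega

lemma exists_isChain_nodup_consecutivePairs (hR : ∀ {a b}, R a b → R b a) {l : List α}
    (hl : l.IsChain R) :
    ∃ τ : List α, τ.IsChain R ∧ τ.head? = l.head? ∧ τ.getLast? = l.getLast? ∧
      τ.consecutivePairs.Nodup ∧ ∃ k, τ.length + 2 * k = l.length := by
  induction hn : l.length using Nat.strong_induction_on generalizing l with
  | _ n ih =>
    by_cases hnd : l.consecutivePairs.Nodup
    · exact ⟨l, hl, rfl, rfl, hnd, 0, by omega⟩
    · obtain ⟨l', hc, hh, hlast, hlen⟩ :=
        exists_shorter_of_not_nodup_consecutivePairs hR hl hnd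
      obtain ⟨τ, hτ, hτh, hτl, hτnd, k, hk⟩ := ih l'.length (by omega) hc rfl
      exact ⟨τ, hτ, hτh.trans hh, hτl.trans hlast, hτnd, k + 1, by omega⟩

lemma WalkUses.symm {p : List α} {a b : α} (h : WalkUses p a b) : WalkUses p b a :=
  Or.symm h

lemma isChain_walkUses (p : List α) : p.IsChain (WalkUses p) :=
  List.isChain_iff_forall_rel_of_append_cons_cons.2 fun _ _ l₁ l₂ h => Or.inl ⟨l₁, l₂, h⟩

lemma WalkUses.rel (hR : ∀ {a b}, R a b → R b a) {p : List α}
    (hp : p.IsChain R) {a b : α} (h : WalkUses p a b) : R a b := by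
  rcases h with ⟨l₁, l₂, rfl⟩ | ⟨l₁, l₂, rfl⟩
  · exact List.isChain_iff_forall_rel_of_append_cons_cons.1 hp rfl
  · exact hR (List.isChain_iff_forall_rel_of_append_cons_cons.1 hp rfl)

variable (ψ : α → ℝ)

noncomputable def alternatingStepSum : List α → ℝ
  | [] => 0
  | [_] => 0
  | a :: b :: l => (ψ a + ψ b) - alternatingStepSum (b :: l)

lemma alternatingStepSum_eq : ∀ {l : List α} {x u : α}, l.head? = some x →
    l.getLast? = some u → alternatingStepSum ψ l = ψ x + (-1) ^ l.length * ψ u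
  | [], _, _, hx, _ => by simp at hx
  | [a], _, _, hx, hu => by
    simp only [List.head?_cons, List.getLast?_singleton, Option.some.injEq] at hx hu
    subst hx hu
    simp [alternatingStepSum]
  | a :: b :: l, _, _, hx, hu => by
    simp only [List.head?_cons, Option.some.injEq] at hx
    subst hx
    rw [List.getLast?_cons_cons] at hu
    rw [alternatingStepSum, alternatingStepSum_eq rfl hu, List.length_cons (a := a), pow_succ]
    ring

lemma sq_alternatingStepSum_le : ∀ l : List α, alternatingStepSum ψ l ^ 2 ≤
    ((l.length : ℝ) - 1) * (l.consecutivePairs.map fun q => (ψ q.1 + ψ q.2) ^ 2).sum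
  | [] => by simp [alternatingStepSum]
  | [_] => by simp [alternatingStepSum]
  | a :: b :: l => by
    have hsum : 0 ≤ ((b :: l).consecutivePairs.map fun q => (ψ q.1 + ψ q.2) ^ 2).sum :=
      List.sum_nonneg (by simp only [List.mem_map]; rintro _ ⟨_, _, rfl⟩; positivity)
    have key := sub_sq_le_of_sq_le (d := ψ a + ψ b) (by simp) hsum
      (sq_alternatingStepSum_le (b :: l))
    simp only [alternatingStepSum, List.length_cons, Nat.cast_add, Nat.cast_one] at key ⊢
    convert key using 2 <;> simp [List.consecutivePairs]

-- A walk is the list of its vertices, so an odd closed walk is a list of even length.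
lemma four_mul_sq_le_of_odd_closed_walk [DecidableEq α] {τ : List α} {x : α}
    (hhead : τ.head? = some x) (hlast : τ.getLast? = some x) (heven : Even τ.length)
    (hnd : τ.consecutivePairs.Nodup) :
    4 * ψ x ^ 2 ≤
      ((τ.length : ℝ) - 1) * ∑ q ∈ τ.consecutivePairs.toFinset, (ψ q.1 + ψ q.2) ^ 2 := by
  rw [List.sum_toFinset _ hnd]
  calc 4 * ψ x ^ 2 = alternatingStepSum ψ τ ^ 2 := by
        rw [alternatingStepSum_eq ψ hhead hlast, heven.neg_one_pow]; ring
    _ ≤ _ := sq_alternatingStepSum_le ψ τ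

lemma exists_finset_four_mul_sq_le_of_odd_closed_walk [DecidableEq α]
    (hR : ∀ {a b}, R a b → R b a) {l : List α} {x : α} (hl : l.IsChain R)
    (hhead : l.head? = some x) (hlast : l.getLast? = some x) (heven : Even l.length) :
    ∃ E : Finset (α × α), (∀ q ∈ E, R q.1 q.2) ∧
      4 * ψ x ^ 2 ≤ ((l.length : ℝ) - 1) * ∑ q ∈ E, (ψ q.1 + ψ q.2) ^ 2 := by
  obtain ⟨τ, hτ, hτhead, hτlast, hnd, k, hk⟩ := exists_isChain_nodup_consecutivePairs hR hl
  refine ⟨τ.consecutivePairs.toFinset, fun ⟨a, b⟩ hq => ?_, ?_⟩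
  · obtain ⟨l₁, l₂, h⟩ := mem_consecutivePairs_iff.1 (List.mem_toFinset.1 hq)
    exact List.isChain_iff_forall_rel_of_append_cons_cons.1 hτ h
  · have hτeven : Even τ.length := by
      obtain ⟨m, hm⟩ := heven
      exact ⟨m - k, by omega⟩
    have hlen : (τ.length : ℝ) ≤ l.length := by exact_mod_cast (by omega : τ.length ≤ l.length)
    have hsum : 0 ≤ ∑ q ∈ τ.consecutivePairs.toFinset, (ψ q.1 + ψ q.2) ^ 2 :=
      sum_nonneg fun _ _ => sq_nonneg _
    calc 4 * ψ x ^ 2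
        ≤ ((τ.length : ℝ) - 1) * ∑ q ∈ τ.consecutivePairs.toFinset, (ψ q.1 + ψ q.2) ^ 2 :=
          four_mul_sq_le_of_odd_closed_walk ψ (hτhead.trans hhead) (hτlast.trans hlast)
            hτeven hnd
      _ ≤ _ := by gcongr

end Walks

section Reversible

variable {Ω : Type*} {P : Matrix Ω Ω ℝ} {π : Ω → ℝ}

lemma pos_symm_of_reversible (hπ : ∀ x, 0 < π x) (hrev : ∀ x y, π x * P x y = π y * P y x)
    {a b : Ω} (h : 0 < P a b) : 0 < P b a :=
  pos_of_mul_pos_right (hrev a b ▸ mul_pos (hπ a) h) (hπ b).le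

variable [Fintype Ω]

lemma sum_mul_eq_of_reversible (hP1 : ∀ x, ∑ y, P x y = 1)
    (hrev : ∀ x y, π x * P x y = π y * P y x) (y : Ω) : ∑ x, π x * P x y = π y := by
  simp_rw [hrev _ y, ← mul_sum, hP1, mul_one]

lemma sum_mul_add_sq_eq_of_mulVec_eq (hP1 : ∀ x, ∑ y, P x y = 1)
    (hstat : ∀ y, ∑ x, π x * P x y = π y) {ψ : Ω → ℝ} {lam : ℝ} (hψ : P.mulVec ψ = lam • ψ) :
    ∑ x, ∑ y, π x * P x y * (ψ x + ψ y) ^ 2 = 2 * (1 + lam) * ∑ x, π x * ψ x ^ 2 := by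
  have hrow : ∀ x, ∑ y, P x y * ψ y = lam * ψ x := fun x => by
    simpa [Matrix.mulVec, dotProduct] using congrFun hψ x
  have hexpand : ∀ x y, π x * P x y * (ψ x + ψ y) ^ 2 =
      π x * ψ x ^ 2 * P x y + 2 * (π x * ψ x) * (P x y * ψ y) + π x * P x y * ψ y ^ 2 :=
    fun _ _ => by ring
  have hlast : ∑ x, ∑ y, π x * P x y * ψ y ^ 2 = ∑ y, π y * ψ y ^ 2 := by
    rw [sum_comm]; simp_rw [← sum_mul, hstat]
  simp_rw [hexpand, sum_add_distrib, ← mul_sum, hrow, hP1, hlast]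
  rw [mul_sum, ← sum_add_distrib, ← sum_add_distrib]
  exact sum_congr rfl fun _ _ => by ring

end Reversible

lemma sum_mul_sum_le_of_congestion {ι κ : Type*} [Fintype ι] [Fintype κ] [DecidableEq κ]
    (E : ι → Finset κ) (w : ι → ℝ) {g c : κ → ℝ} (hg : ∀ q, 0 ≤ g q)
    (hc : ∀ q, ∑ x ∈ univ.filter (q ∈ E ·), w x ≤ c q) :
    ∑ x, w x * ∑ q ∈ E x, g q ≤ ∑ q, c q * g q :=
  calc ∑ x, w x * ∑ q ∈ E x, g q = ∑ x, ∑ q ∈ E x, w x * g q := by simp_rw [mul_sum]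
    _ = ∑ q, ∑ x ∈ univ.filter (q ∈ E ·), w x * g q := sum_comm' (by simp)
    _ = ∑ q, (∑ x ∈ univ.filter (q ∈ E ·), w x) * g q := by simp_rw [sum_mul]
    _ ≤ ∑ q, c q * g q := sum_le_sum fun q _ => mul_le_mul_of_nonneg_right (hc q) (hg q)

lemma four_mul_sum_le_of_congestion {Ω : Type*} [Fintype Ω] [DecidableEq Ω]
    {P : Matrix Ω Ω ℝ} {π ψ L : Ω → ℝ} {η : ℝ} (hπ : ∀ x, 0 ≤ π x) (E : Ω → Finset (Ω × Ω))
    (hE : ∀ x, 4 * ψ x ^ 2 ≤ L x * ∑ q ∈ E x, (ψ q.1 + ψ q.2) ^ 2)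
    (hc : ∀ q, ∑ x ∈ univ.filter (q ∈ E ·), L x * π x ≤ η * (π q.1 * P q.1 q.2)) :
    4 * ∑ x, π x * ψ x ^ 2 ≤ η * ∑ x, ∑ y, π x * P x y * (ψ x + ψ y) ^ 2 :=
  calc 4 * ∑ x, π x * ψ x ^ 2 = ∑ x, π x * (4 * ψ x ^ 2) := by
        rw [mul_sum]; exact sum_congr rfl fun _ _ => by ring
    _ ≤ ∑ x, L x * π x * ∑ q ∈ E x, (ψ q.1 + ψ q.2) ^ 2 := sum_le_sum fun x _ => by
        have := mul_le_mul_of_nonneg_left (hE x) (hπ x)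
        linarith
    _ ≤ ∑ q : Ω × Ω, η * (π q.1 * P q.1 q.2) * (ψ q.1 + ψ q.2) ^ 2 :=
        sum_mul_sum_le_of_congestion E _ (fun _ => sq_nonneg _) hc
    _ = η * ∑ x, ∑ y, π x * P x y * (ψ x + ψ y) ^ 2 := by
        rw [Fintype.sum_prod_type, mul_sum]; simp_rw [mul_sum, mul_assoc]

lemma sum_filter_mem_le_of_mem_upperBounds {Ω : Type*} [Fintype Ω] [DecidableEq Ω]
    {P : Matrix Ω Ω ℝ} {π : Ω → ℝ} {σ : Ω → List Ω} {η : ℝ} (hP0 : ∀ x y, 0 ≤ P x y)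
    (hπ : ∀ x, 0 < π x) (hsymm : ∀ {a b}, 0 < P a b → 0 < P b a)
    (hσ : ∀ x, (σ x).IsChain fun a b => 0 < P a b)
    (hη : η ∈ upperBounds {r : ℝ | ∃ a b : Ω, 0 < P a b ∧
      r = (π a * P a b)⁻¹ *
        ∑ x ∈ Finset.univ.filter (fun x => WalkUses (σ x) a b), (((σ x).length : ℝ) - 1) * π x})
    (hη0 : 0 ≤ η) (hw : ∀ x, 0 ≤ (((σ x).length : ℝ) - 1) * π x) {E : Ω → Finset (Ω × Ω)}
    (hE : ∀ x, ∀ q ∈ E x, WalkUses (σ x) q.1 q.2) (q : Ω × Ω) :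
    ∑ x ∈ univ.filter (q ∈ E ·), (((σ x).length : ℝ) - 1) * π x ≤ η * (π q.1 * P q.1 q.2) := by
  obtain ⟨a, b⟩ := q
  by_cases hab : 0 < P a b
  · calc _ ≤ ∑ x ∈ univ.filter (fun x => WalkUses (σ x) a b), (((σ x).length : ℝ) - 1) * π x :=
          sum_le_sum_of_subset_of_nonneg (monotone_filter_right _ fun x _ => hE x _)
            fun x _ _ => hw x
      _ ≤ η * (π a * P a b) := by
          rw [mul_comm η, ← inv_mul_le_iff₀ (mul_pos (hπ a) hab)]
          exact hη ⟨a, b, hab, rfl⟩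
  · rw [sum_eq_zero fun x hx => absurd (WalkUses.rel hsymm (hσ x) (hE x _ (mem_filter.1 hx).2)) hab]
    exact mul_nonneg hη0 (mul_nonneg (hπ a).le (hP0 a b))

lemma sum_mul_sq_pos {Ω : Type*} [Fintype Ω] {π ψ : Ω → ℝ} (hπ : ∀ x, 0 < π x) (hψ : ψ ≠ 0) :
    0 < ∑ x, π x * ψ x ^ 2 := by
  obtain ⟨x, hx⟩ := Function.ne_iff.1 hψ
  exact sum_pos' (fun y _ => by have := hπ y; positivity)
    ⟨x, mem_univ x, mul_pos (hπ x) (sq_pos_of_ne_zero hx)⟩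

lemma inv_le_half_of_two_le_mul {t η : ℝ} (hη : 0 ≤ η) (h : 2 ≤ η * t) : t⁻¹ ≤ η / 2 := by
  have ht : 0 < t := by
    by_contra! ht
    nlinarith [mul_nonpos_of_nonneg_of_nonpos hη ht]
  rw [inv_le_iff_one_le_mul₀ ht]
  linarith

theorem smallest_eigenvalue_odd_cycle_bound_general {Ω : Type*} [Fintype Ω]
    (P : Matrix Ω Ω ℝ) (π : Ω → ℝ)
    (hP0 : ∀ x y, 0 ≤ P x y) (hP1 : ∀ x, ∑ y, P x y = 1)
    (hπpos : ∀ x, 0 < π x)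
    (hrev : ∀ x y, π x * P x y = π y * P y x)
    (σ : Ω → List Ω)
    (hσstart : ∀ x, (σ x).head? = some x)
    (hσend : ∀ x, (σ x).getLast? = some x)
    (hσchain : ∀ x, (σ x).Chain' fun a b => 0 < P a b)
    (hσodd : ∀ x, Odd ((σ x).length - 1))
    (η : ℝ)
    (hη : IsGreatest
      {r : ℝ | ∃ a b : Ω, 0 < P a b ∧
        r = (π a * P a b)⁻¹ *
          ∑ x ∈ Finset.univ.filter (fun x => WalkUses (σ x) a b),
            (((σ x).length : ℝ) - 1) * π x} η)
    (lam : ℝ)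
    (hlam : IsLeast {l : ℝ | ∃ ψ : Ω → ℝ, ψ ≠ 0 ∧ P.mulVec ψ = l • ψ} lam) :
    (1 + lam)⁻¹ ≤ η / 2 := by
  obtain ⟨ψ, hψ0, hψ⟩ := hlam.1
  have hlen : ∀ x, 2 ≤ (σ x).length := fun x => by have := (hσodd x).pos; omega
  have heven : ∀ x, Even (σ x).length := fun x => by
    obtain ⟨k, hk⟩ := hσodd x
    exact ⟨k + 1, by have := hlen x; omega⟩
  have hw : ∀ x, 0 ≤ (((σ x).length : ℝ) - 1) * π x := fun x => by
    have : (2 : ℝ) ≤ (σ x).length := by exact_mod_cast hlen x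
    exact mul_nonneg (by linarith) (hπpos x).le
  have hη0 : 0 ≤ η := by
    obtain ⟨a, b, hab, rfl⟩ := hη.1
    exact mul_nonneg (inv_nonneg.2 (mul_pos (hπpos a) hab).le) (sum_nonneg fun x _ => hw x)
  choose E hEuses hEψ using fun x => exists_finset_four_mul_sq_le_of_odd_closed_walk ψ
    WalkUses.symm (isChain_walkUses (σ x)) (hσstart x) (hσend x) (heven x)
  have key := four_mul_sum_le_of_congestion (fun x => (hπpos x).le) E hEψ
    (sum_filter_mem_le_of_mem_upperBounds hP0 hπpos (pos_symm_of_reversible hπpos hrev) hσchain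
      hη.2 hη0 hw hEuses)
  rw [sum_mul_add_sq_eq_of_mulVec_eq hP1 (sum_mul_eq_of_reversible hP1 hrev) hψ] at key
  exact inv_le_half_of_two_le_mul hη0 (by nlinarith [sum_mul_sq_pos hπpos hψ0])

/-- Let `M` be an ergodic time-reversible Markov chain on a finite
state space, and for each state `x` fix a closed walk `σ x` from `x` to `x` of odd
length in the underlying graph of the chain.  With
`η = max_{e ∈ Γ} Q(e)⁻¹ ∑_{x : e ∈ σ_x} |σ_x| π(x)`, the smallest eigenvalue
`λ_{N-1}` of the chain satisfies `(1 + λ_{N-1})⁻¹ ≤ η / 2`. -/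
theorem smallest_eigenvalue_odd_cycle_bound {Ω : Type*} [Fintype Ω] [DecidableEq Ω]
    [Nonempty Ω] (P : Matrix Ω Ω ℝ) (π : Ω → ℝ)
    (hP0 : ∀ x y, 0 ≤ P x y) (hP1 : ∀ x, ∑ y, P x y = 1)
    (hπpos : ∀ x, 0 < π x) (hπsum : ∑ x, π x = 1)
    (hrev : ∀ x y, π x * P x y = π y * P y x)
    (herg : ∃ t : ℕ, ∀ x y, 0 < (P ^ t) x y)
    (σ : Ω → List Ω)
    (hσstart : ∀ x, (σ x).head? = some x)
    (hσend : ∀ x, (σ x).getLast? = some x)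
    (hσchain : ∀ x, (σ x).Chain' fun a b => 0 < P a b)
    (hσodd : ∀ x, Odd ((σ x).length - 1))
    (η : ℝ)
    (hη : IsGreatest
      {r : ℝ | ∃ a b : Ω, 0 < P a b ∧
        r = (π a * P a b)⁻¹ *
          ∑ x ∈ Finset.univ.filter (fun x => WalkUses (σ x) a b),
            (((σ x).length : ℝ) - 1) * π x} η)
    (lam : ℝ)
    (hlam : IsLeast {l : ℝ | ∃ ψ : Ω → ℝ, ψ ≠ 0 ∧ P.mulVec ψ = l • ψ} lam) :
    (1 + lam)⁻¹ ≤ η / 2 :=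
  smallest_eigenvalue_odd_cycle_bound_general P π hP0 hP1 hπpos hrev σ hσstart hσend hσchain hσodd η
    hη lam hlam
end

section
/- Let M be an ergodic time-reversible Markov chain on a finite state space Ω with transition matrix P and stationary distribution π, with eigenvalues 1 = λ_0 > λ_1 ≥ ... ≥ λ_{N−1} ≥ −1 where N = |Ω|. For each x ∈ Ω fix a closed walk σ_x from x to x of odd length in the underlying graph 𝒢 of the chain, and let Σ = {σ_x : x ∈ Ω}. Define η'(Σ) = max_{e∈Γ} (1/Q(e)) · ∑_{x∈Ω, e∈σ_x} π(x) and ℓ(Σ) = max_{x∈Ω} |σ_x|. Then (1 + λ_{N−1})^{-1} ≤ η'(Σ)·ℓ(Σ)/2. -/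
attribute [local instance] Classical.propDecidable

/-!
If `P ψ = λ ψ`, reversibility gives `∑_{a,b} Q(a,b) (ψ a + ψ b)² = 2 (1 + λ) ∑_x π x ψ(x)²`.
Along an odd closed walk `x = w₀, …, w_k = x` the alternating sum of `ψ wᵢ + ψ wᵢ₊₁` is `2 ψ x`,
so Cauchy–Schwarz gives `4 ψ(x)² ≤ k ∑ᵢ (ψ wᵢ + ψ wᵢ₊₁)²`. Summing with weights `π x` and
regrouping by edges gives `4 ∑_x π x ψ(x)² ≤ ℓ η' ∑_{a,b} Q(a,b) (ψ a + ψ b)²`, as long as no walk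
traverses an edge more than twice. To arrange this, cut every closed subwalk of even length out
of `σ x`: the result is still odd and closed at `x`, no vertex occurs in it twice at positions of
the same parity, and then each edge is traversed at most twice.
-/

open Finset

section

variable {Ω : Type*}

theorem sum_range_neg_one_pow_mul_add_succ (f : ℕ → ℝ) (k : ℕ) :
    ∑ i ∈ range k, (-1) ^ i * (f i + f (i + 1)) = f 0 - (-1) ^ k * f k := by
  induction k with
  | zero => simp
  | succ k ih => rw [sum_range_succ, ih, pow_succ]; ring

theorem four_mul_sq_le_mul_sum_sq_add_succ {f : ℕ → ℝ} {k : ℕ} (hk : Odd k) (hf : f k = f 0) :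
    4 * f 0 ^ 2 ≤ k * ∑ i ∈ range k, (f i + f (i + 1)) ^ 2 := by
  have h := sq_sum_le_card_mul_sum_sq (s := range k)
    (f := fun i => (-1 : ℝ) ^ i * (f i + f (i + 1)))
  simp only [sum_range_neg_one_pow_mul_add_succ, hk.neg_one_pow, hf, card_range, mul_pow,
    ← pow_mul, pow_mul', neg_one_sq, one_pow, one_mul] at h
  linarith

-- A walk of length `k` is a map `v : ℕ → Ω`, of which only `v 0, …, v k` matter.
theorem exists_walk_length_sub_of_eq {R : Ω → Ω → Prop} {v : ℕ → Ω} {k i j : ℕ}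
    (hv : ∀ t < k, R (v t) (v (t + 1))) (hij : i ≤ j) (hjk : j ≤ k) (he : v i = v j) :
    ∃ w : ℕ → Ω, w 0 = v 0 ∧ w (k - (j - i)) = v k ∧ ∀ t < k - (j - i), R (w t) (w (t + 1)) := by
  refine ⟨fun t => if t ≤ i then v t else v (t + (j - i)), by simp, ?_, fun t ht => ?_⟩
  · dsimp only
    split_ifs with h
    · rw [show k - (j - i) = i by omega, he, show j = k by omega]
    · rw [show k - (j - i) + (j - i) = k by omega]
  · dsimp only
    split_ifs with h₁ h₂ h₂
    · exact hv t (by omega)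
    · obtain rfl : t = i := by omega
      rw [he, show t + 1 + (j - t) = j + 1 by omega]
      exact hv j (by omega)
    · omega
    · rw [show t + 1 + (j - i) = t + (j - i) + 1 by omega]
      exact hv _ (by omega)

theorem exists_odd_closed_walk_parity_injective {R : Ω → Ω → Prop} {x : Ω} {k : ℕ}
    {v : ℕ → Ω} (hk : Odd k) (h0 : v 0 = x) (hkx : v k = x) (hv : ∀ t < k, R (v t) (v (t + 1))) :
    ∃ k' ≤ k, ∃ w : ℕ → Ω, Odd k' ∧ w 0 = x ∧ w k' = x ∧ (∀ t < k', R (w t) (w (t + 1))) ∧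
      ∀ i j, i < j → j ≤ k' → i % 2 = j % 2 → w i ≠ w j := by
  induction k using Nat.strong_induction_on generalizing v with
  | _ k ih =>
    by_cases hrep : ∃ i j, i < j ∧ j ≤ k ∧ i % 2 = j % 2 ∧ v i = v j
    · obtain ⟨i, j, hij, hjk, hpar, he⟩ := hrep
      obtain ⟨w, hw0, hwk, hw⟩ := exists_walk_length_sub_of_eq hv hij.le hjk he
      have hodd : Odd (k - (j - i)) := by
        rw [Nat.odd_iff] at hk ⊢; omega
      obtain ⟨k', hk', w', h⟩ := ih _ (by omega) hodd (hw0.trans h0) (hwk.trans hkx) hw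
      exact ⟨k', by omega, w', h⟩
    · push Not at hrep
      exact ⟨k, le_rfl, v, hk, h0, hkx, hv, hrep⟩

noncomputable def edgeCount (w : ℕ → Ω) (k : ℕ) (a b : Ω) : ℕ :=
  #{i ∈ range k | w i = a ∧ w (i + 1) = b}

theorem edgeCount_eq_zero {R : Ω → Ω → Prop} {w : ℕ → Ω} {k : ℕ}
    (hw : ∀ t < k, R (w t) (w (t + 1))) {a b : Ω} (hab : ¬R a b) : edgeCount w k a b = 0 := by
  rw [edgeCount, card_eq_zero, filter_eq_empty_iff]
  rintro t ht ⟨rfl, rfl⟩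
  exact hab (hw t (mem_range.mp ht))

theorem edgeCount_add_edgeCount_swap_le_two {w : ℕ → Ω} {k : ℕ}
    (hw : ∀ i j, i < j → j ≤ k → i % 2 = j % 2 → w i ≠ w j) (a b : Ω) :
    edgeCount w k a b + edgeCount w k b a ≤ 2 := by
  have hinj : ∀ i ≤ k, ∀ j ≤ k, i % 2 = j % 2 → w i = w j → i = j := by
    intro i hi j hj hp he
    by_contra hne
    rcases lt_or_gt_of_ne hne with h | h
    · exact hw i j h hj hp he
    · exact hw j i h hi hp.symm he.symm
  -- a step through `{a, b}` is determined by the parity of the position of `a` on it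
  let pos : ℕ ⊕ ℕ → ℕ := Sum.elim (fun i => i % 2) (fun i => (i + 1) % 2)
  calc edgeCount w k a b + edgeCount w k b a
      = #(({i ∈ range k | w i = a ∧ w (i + 1) = b}).disjSum
          {i ∈ range k | w i = b ∧ w (i + 1) = a}) := (card_disjSum _ _).symm
    _ ≤ #(range 2) := by
        refine card_le_card_of_injOn pos (fun i _ => mem_range.mpr ?_) ?_
        · rcases i with i | i <;> exact Nat.mod_lt _ two_pos
        · rintro (i | i) hi (j | j) hj hij <;>
            simp only [mem_coe, inl_mem_disjSum, inr_mem_disjSum, mem_filter, mem_range, pos,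
              Sum.elim_inl, Sum.elim_inr, Sum.inl.injEq, Sum.inr.injEq, reduceCtorEq] at hi hj hij ⊢
          · exact hinj i (by omega) j (by omega) hij (hi.2.1.trans hj.2.1.symm)
          · have := hinj i (by omega) (j + 1) (by omega) hij (hi.2.1.trans hj.2.2.symm)
            subst this
            exact absurd (hinj j (by omega) (j + 2) (by omega) (by omega)
              (hj.2.1.trans hi.2.2.symm)) (by omega)
          · have := hinj (i + 1) (by omega) j (by omega) hij (hi.2.2.trans hj.2.1.symm)
            subst this
            exact absurd (hinj i (by omega) (i + 2) (by omega) (by omega)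
              (hi.2.1.trans hj.2.2.symm)) (by omega)
          · have := hinj (i + 1) (by omega) (j + 1) (by omega) hij (hi.2.2.trans hj.2.2.symm)
            omega
    _ = 2 := card_range 2

theorem sum_range_eq_sum_sum_edgeCount_mul [Fintype Ω] (w : ℕ → Ω) (k : ℕ)
    (F : Ω → Ω → ℝ) :
    ∑ i ∈ range k, F (w i) (w (i + 1)) = ∑ a, ∑ b, edgeCount w k a b * F a b := by
  rw [← sum_fiberwise (range k) (fun i => (w i, w (i + 1))), Fintype.sum_prod_type]
  refine sum_congr rfl fun a _ => sum_congr rfl fun b _ => ?_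
  rw [edgeCount, ← nsmul_eq_mul, ← sum_const]
  refine sum_congr (filter_congr fun i _ => Prod.ext_iff) fun i hi => ?_
  simp only [mem_filter] at hi
  rw [hi.2.1, hi.2.2]

theorem walkUses_getElem {l : List Ω} {t : ℕ} (ht : t + 1 < l.length) :
    WalkUses l l[t] l[t + 1] :=
  Or.inl ⟨l.take t, l.drop (t + 2), by
    rw [List.getElem_cons_drop, List.getElem_cons_drop, List.take_append_drop]⟩

theorem List.IsChain.exists_odd_closed_walk_parity_injective {R : Ω → Ω → Prop}
    {l : List Ω} {x : Ω} (hR : l.IsChain R) (hhead : l.head? = some x) (hlast : l.getLast? = some x)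
    (hodd : Odd (l.length - 1)) :
    ∃ k ≤ l.length - 1, ∃ w : ℕ → Ω, Odd k ∧ w 0 = x ∧ w k = x ∧
      (∀ t < k, R (w t) (w (t + 1)) ∧ WalkUses l (w t) (w (t + 1))) ∧
      ∀ i j, i < j → j ≤ k → i % 2 = j % 2 → w i ≠ w j := by
  refine _root_.exists_odd_closed_walk_parity_injective
    (R := fun a b => R a b ∧ WalkUses l a b) (x := x) (v := fun i => l.getD i x) hodd
    (by simp [List.getD_eq_getElem?_getD, ← List.head?_eq_getElem?, hhead])
    (by simp [List.getD_eq_getElem?_getD, ← List.getLast?_eq_getElem?, hlast]) fun t ht => ?_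
  simp only [List.getD_eq_getElem l x (show t < l.length by omega),
    List.getD_eq_getElem l x (show t + 1 < l.length by omega)]
  exact ⟨List.isChain_iff_getElem.mp hR t (by omega), walkUses_getElem (by omega)⟩

theorem sum_sum_mul_le_of_add_swap_le [Fintype Ω] {N G F : Ω → Ω → ℝ}
    (hF : ∀ a b, F b a = F a b) (hF0 : ∀ a b, 0 ≤ F a b)
    (hNG : ∀ a b, N a b + N b a ≤ 2 * G a b) :
    ∑ a, ∑ b, N a b * F a b ≤ ∑ a, ∑ b, G a b * F a b := by
  have hswap : ∑ a, ∑ b, N b a * F a b = ∑ a, ∑ b, N a b * F a b := by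
    rw [sum_comm]
    simp_rw [hF]
  have h : ∑ a, ∑ b, (N a b + N b a) * F a b ≤ ∑ a, ∑ b, 2 * G a b * F a b := by
    gcongr with a _ b _
    exacts [hF0 a b, hNG a b]
  simp only [add_mul, sum_add_distrib, hswap, mul_assoc, ← mul_sum] at h
  linarith

section Reversible

variable [Fintype Ω] {P : Matrix Ω Ω ℝ} {π : Ω → ℝ} {σ : Ω → List Ω} {η' : ℝ}

theorem sum_sum_mul_add_sq_eq_of_mulVec_eq {ψ : Ω → ℝ} {lam : ℝ} (hP1 : ∀ x, ∑ y, P x y = 1)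
    (hrev : ∀ x y, π x * P x y = π y * P y x) (hψ : P.mulVec ψ = lam • ψ) :
    ∑ a, ∑ b, π a * P a b * (ψ a + ψ b) ^ 2 = 2 * (1 + lam) * ∑ a, π a * ψ a ^ 2 := by
  have hmulVec (a : Ω) : ∑ b, P a b * ψ b = lam * ψ a := by
    simpa [Matrix.mulVec, dotProduct] using congrFun hψ a
  have hcol : ∑ a, ∑ b, π a * P a b * ψ b ^ 2 = ∑ b, π b * ψ b ^ 2 := by
    rw [sum_comm]
    refine sum_congr rfl fun b _ => ?_
    simp only [hrev _ b, mul_right_comm _ _ (ψ b ^ 2), mul_assoc, ← mul_sum, hP1, mul_one]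
  have expand (a b : Ω) : π a * P a b * (ψ a + ψ b) ^ 2 =
      π a * ψ a ^ 2 * P a b + 2 * π a * ψ a * (P a b * ψ b) + π a * P a b * ψ b ^ 2 := by
    ring
  have hrow (a : Ω) : ∑ b, π a * P a b * (ψ a + ψ b) ^ 2 =
      (1 + 2 * lam) * (π a * ψ a ^ 2) + ∑ b, π a * P a b * ψ b ^ 2 := by
    simp only [expand, sum_add_distrib, ← mul_sum, hP1, hmulVec]
    ring
  rw [sum_congr rfl fun a _ => hrow a, sum_add_distrib, ← mul_sum, hcol]
  ring

theorem sum_mul_edgeCount_add_swap_le (hP0 : ∀ x y, 0 ≤ P x y) (hπpos : ∀ x, 0 < π x)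
    (hrev : ∀ x y, π x * P x y = π y * P y x)
    (hη' : η' ∈ upperBounds
      {r : ℝ | ∃ a b : Ω, 0 < P a b ∧
        r = (π a * P a b)⁻¹ *
          ∑ x ∈ Finset.univ.filter (fun x => WalkUses (σ x) a b), π x})
    {k : Ω → ℕ} {w : Ω → ℕ → Ω}
    (hstep : ∀ x, ∀ t < k x, 0 < P (w x t) (w x (t + 1)) ∧ WalkUses (σ x) (w x t) (w x (t + 1)))
    (hpar : ∀ x i j, i < j → j ≤ k x → i % 2 = j % 2 → w x i ≠ w x j) (a b : Ω) :
    ∑ x, π x * ((edgeCount (w x) (k x) a b : ℝ) + edgeCount (w x) (k x) b a) ≤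
      2 * η' * (π a * P a b) := by
  have hzero {x : Ω} {c d : Ω} (h : ¬(0 < P c d ∧ WalkUses (σ x) c d)) :
      edgeCount (w x) (k x) c d = 0 :=
    edgeCount_eq_zero (R := fun c d => 0 < P c d ∧ WalkUses (σ x) c d) (hstep x) h
  by_cases hab : 0 < P a b
  · have hη := hη' ⟨a, b, hab, rfl⟩
    rw [inv_mul_le_iff₀ (mul_pos (hπpos a) hab)] at hη
    calc ∑ x, π x * ((edgeCount (w x) (k x) a b : ℝ) + edgeCount (w x) (k x) b a)
        ≤ ∑ x ∈ univ.filter (fun x => WalkUses (σ x) a b), π x * 2 := by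
          rw [sum_filter]
          refine sum_le_sum fun x _ => ?_
          split_ifs with hx
          · gcongr
            · exact (hπpos x).le
            · exact_mod_cast edgeCount_add_edgeCount_swap_le_two (hpar x) a b
          · simp [hzero fun h => hx h.2, hzero fun h => hx h.2.symm]
      _ ≤ 2 * η' * (π a * P a b) := by
          rw [← sum_mul]
          linarith
  · have hba : ¬0 < P b a := fun h =>
      hab (pos_of_mul_pos_right (hrev a b ▸ mul_pos (hπpos b) h) (hπpos a).le)
    simp [hzero fun h => hab h.1, hzero fun h => hba h.1,
      le_antisymm (not_lt.mp hab) (hP0 a b)]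

theorem four_mul_sum_sq_le_mul_sum_sum (hP0 : ∀ x y, 0 ≤ P x y) (hπpos : ∀ x, 0 < π x)
    (hrev : ∀ x y, π x * P x y = π y * P y x)
    (hσstart : ∀ x, (σ x).head? = some x) (hσend : ∀ x, (σ x).getLast? = some x)
    (hσchain : ∀ x, (σ x).IsChain fun a b => 0 < P a b) (hσodd : ∀ x, Odd ((σ x).length - 1))
    (hη' : η' ∈ upperBounds
      {r : ℝ | ∃ a b : Ω, 0 < P a b ∧
        r = (π a * P a b)⁻¹ *
          ∑ x ∈ Finset.univ.filter (fun x => WalkUses (σ x) a b), π x})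
    {ℓ : ℕ} (hℓ : ∀ x, (σ x).length - 1 ≤ ℓ) (ψ : Ω → ℝ) :
    4 * ∑ x, π x * ψ x ^ 2 ≤ ℓ * η' * ∑ a, ∑ b, π a * P a b * (ψ a + ψ b) ^ 2 := by
  choose k hk w hodd h0 hkx hstep hpar using fun x =>
    (hσchain x).exists_odd_closed_walk_parity_injective (hσstart x) (hσend x) (hσodd x)
  have hwalk (x : Ω) :
      4 * ψ x ^ 2 ≤ ℓ * ∑ i ∈ range (k x), (ψ (w x i) + ψ (w x (i + 1))) ^ 2 := by
    calc 4 * ψ x ^ 2 ≤ k x * ∑ i ∈ range (k x), (ψ (w x i) + ψ (w x (i + 1))) ^ 2 := by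
          simpa [h0] using four_mul_sq_le_mul_sum_sq_add_succ (f := fun i => ψ (w x i)) (hodd x)
            (by simp [h0, hkx])
      _ ≤ ℓ * ∑ i ∈ range (k x), (ψ (w x i) + ψ (w x (i + 1))) ^ 2 := by
          gcongr
          exact_mod_cast (hk x).trans (hℓ x)
  calc 4 * ∑ x, π x * ψ x ^ 2
      ≤ ∑ x, π x * (ℓ * ∑ i ∈ range (k x), (ψ (w x i) + ψ (w x (i + 1))) ^ 2) := by
        rw [mul_sum]
        refine sum_le_sum fun x _ => ?_
        rw [mul_left_comm]
        exact mul_le_mul_of_nonneg_left (hwalk x) (hπpos x).le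
    _ = ℓ * ∑ a, ∑ b, (∑ x, π x * edgeCount (w x) (k x) a b) * (ψ a + ψ b) ^ 2 := by
        simp_rw [sum_range_eq_sum_sum_edgeCount_mul (w _) (k _) fun a b => (ψ a + ψ b) ^ 2]
        simp only [mul_sum, sum_mul]
        rw [sum_comm]
        refine sum_congr rfl fun a _ => ?_
        rw [sum_comm]
        exact sum_congr rfl fun b _ => sum_congr rfl fun x _ => by ring
    _ ≤ ℓ * ∑ a, ∑ b, η' * (π a * P a b) * (ψ a + ψ b) ^ 2 := by
        refine mul_le_mul_of_nonneg_left ?_ (Nat.cast_nonneg ℓ)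
        refine sum_sum_mul_le_of_add_swap_le (F := fun a b => (ψ a + ψ b) ^ 2)
          (fun a b => by ring) (fun a b => sq_nonneg _) fun a b => ?_
        rw [← sum_add_distrib]
        simp_rw [← mul_add]
        linarith [sum_mul_edgeCount_add_swap_le hP0 hπpos hrev hη' hstep hpar a b]
    _ = ℓ * η' * ∑ a, ∑ b, π a * P a b * (ψ a + ψ b) ^ 2 := by
        simp only [mul_sum, mul_assoc]

end Reversible

end

theorem smallest_eigenvalue_odd_cycle_bound'_general {Ω : Type*} [Fintype Ω]
    (P : Matrix Ω Ω ℝ) (π : Ω → ℝ)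
    (hP0 : ∀ x y, 0 ≤ P x y) (hP1 : ∀ x, ∑ y, P x y = 1)
    (hπpos : ∀ x, 0 < π x)
    (hrev : ∀ x y, π x * P x y = π y * P y x)
    (σ : Ω → List Ω)
    (hσstart : ∀ x, (σ x).head? = some x)
    (hσend : ∀ x, (σ x).getLast? = some x)
    (hσchain : ∀ x, (σ x).Chain' fun a b => 0 < P a b)
    (hσodd : ∀ x, Odd ((σ x).length - 1))
    (η' : ℝ)
    (hη' : IsGreatest
      {r : ℝ | ∃ a b : Ω, 0 < P a b ∧
        r = (π a * P a b)⁻¹ *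
          ∑ x ∈ Finset.univ.filter (fun x => WalkUses (σ x) a b), π x} η')
    (ℓ : ℕ)
    (hℓ : IsGreatest {k : ℕ | ∃ x : Ω, k = (σ x).length - 1} ℓ)
    (lam : ℝ)
    (hlam : IsLeast {l : ℝ | ∃ ψ : Ω → ℝ, ψ ≠ 0 ∧ P.mulVec ψ = l • ψ} lam) :
    (1 + lam)⁻¹ ≤ η' * (ℓ : ℝ) / 2 := by
  obtain ⟨ψ, hψ, hψeig⟩ := hlam.1
  have hS : 0 < ∑ x, π x * ψ x ^ 2 := by
    obtain ⟨x, hx⟩ := Function.ne_iff.mp hψ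
    exact sum_pos' (fun y _ => mul_nonneg (hπpos y).le (sq_nonneg _))
      ⟨x, mem_univ x, mul_pos (hπpos x) (sq_pos_of_ne_zero hx)⟩
  have hη'0 : 0 ≤ η' := by
    obtain ⟨a, b, hab, rfl⟩ := hη'.1
    exact mul_nonneg (inv_nonneg.mpr (mul_pos (hπpos a) hab).le)
      (sum_nonneg fun x _ => (hπpos x).le)
  have h := four_mul_sum_sq_le_mul_sum_sum hP0 hπpos hrev hσstart hσend hσchain hσodd hη'.2
    (fun x => hℓ.2 ⟨x, rfl⟩) ψ
  rw [sum_sum_mul_add_sq_eq_of_mulVec_eq hP1 hrev hψeig] at h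
  have h2 : 2 ≤ ℓ * η' * (1 + lam) := by nlinarith
  have hlam0 : 0 < 1 + lam := by nlinarith [mul_nonneg (Nat.cast_nonneg ℓ : (0 : ℝ) ≤ ℓ) hη'0]
  rw [inv_le_iff_one_le_mul₀ hlam0]
  linarith

/-- Let `M` be an ergodic time-reversible Markov chain on a finite
state space, and for each state `x` fix a closed walk `σ x` from `x` to `x` of odd
length in the underlying graph of the chain.  With
`η' = max_{e ∈ Γ} Q(e)⁻¹ ∑_{x : e ∈ σ_x} π(x)` and `ℓ = max_x |σ_x|`, the smallest
eigenvalue `λ_{N-1}` of the chain satisfies `(1 + λ_{N-1})⁻¹ ≤ η' ℓ / 2`. -/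
theorem smallest_eigenvalue_odd_cycle_bound' {Ω : Type*} [Fintype Ω] [DecidableEq Ω]
    [Nonempty Ω] (P : Matrix Ω Ω ℝ) (π : Ω → ℝ)
    (hP0 : ∀ x y, 0 ≤ P x y) (hP1 : ∀ x, ∑ y, P x y = 1)
    (hπpos : ∀ x, 0 < π x) (hπsum : ∑ x, π x = 1)
    (hrev : ∀ x y, π x * P x y = π y * P y x)
    (herg : ∃ t : ℕ, ∀ x y, 0 < (P ^ t) x y)
    (σ : Ω → List Ω)
    (hσstart : ∀ x, (σ x).head? = some x)
    (hσend : ∀ x, (σ x).getLast? = some x)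
    (hσchain : ∀ x, (σ x).Chain' fun a b => 0 < P a b)
    (hσodd : ∀ x, Odd ((σ x).length - 1))
    (η' : ℝ)
    (hη' : IsGreatest
      {r : ℝ | ∃ a b : Ω, 0 < P a b ∧
        r = (π a * P a b)⁻¹ *
          ∑ x ∈ Finset.univ.filter (fun x => WalkUses (σ x) a b), π x} η')
    (ℓ : ℕ)
    (hℓ : IsGreatest {k : ℕ | ∃ x : Ω, k = (σ x).length - 1} ℓ)
    (lam : ℝ)
    (hlam : IsLeast {l : ℝ | ∃ ψ : Ω → ℝ, ψ ≠ 0 ∧ P.mulVec ψ = l • ψ} lam) :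
    (1 + lam)⁻¹ ≤ η' * (ℓ : ℝ) / 2 :=
  smallest_eigenvalue_odd_cycle_bound'_general P π hP0 hP1 hπpos hrev σ hσstart hσend hσchain hσodd
    η' hη' ℓ hℓ lam hlam
end

section
/- Let n ≥ 4 and 1 ≤ d ≤ n−1. Then Ω_{n,d} is connected under switches: for any two digraphs G, G' ∈ Ω_{n,d} there is a finite sequence G = Z_0, Z_1, ..., Z_M = G' of digraphs in Ω_{n,d} such that each Z_{a+1} is obtained from Z_a by a single switch. -/
attribute [local instance] Classical.propDecidable

/-- `A` is the arc set of a `d`-regular digraph on the vertex set `Fin n`: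
no loops, and every vertex has out-degree `d` and in-degree `d`. -/
def IsRegularDigraph (n d : ℕ) (A : Finset (Fin n × Fin n)) : Prop :=
  (∀ a ∈ A, a.1 ≠ a.2) ∧
  (∀ v : Fin n, (A.filter fun a => a.1 = v).card = d ∧
                (A.filter fun a => a.2 = v).card = d)

/-- `Ω_{n,d}`, the set of all `d`-regular digraphs on `[n]`. -/
abbrev Omega (n d : ℕ) : Type := {A : Finset (Fin n × Fin n) // IsRegularDigraph n d A}

/-- `G'` is obtained from `G` by a single switch: two non-incident arcs
`(i,j)`, `(k,l)` exchange their heads, provided no repeated arc is created. -/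
def IsSwitch {n : ℕ} (G G' : Finset (Fin n × Fin n)) : Prop :=
  ∃ i j k l : Fin n,
    (i, j) ∈ G ∧ (k, l) ∈ G ∧
    ({i, j, k, l} : Finset (Fin n)).card = 4 ∧
    (i, l) ∉ G ∧ (k, j) ∉ G ∧
    G' = (G \ {(i, j), (k, l)}) ∪ {(i, l), (k, j)}

/-- The transition matrix of the switch chain on `Ω_{n,d}`:  an unordered pair of
distinct arcs is chosen uniformly at random (there are `binom(dn,2)` such pairs) and
the corresponding switch is performed if legal; otherwise the chain stays put. -/
noncomputable def switchP (n d : ℕ) : Matrix (Omega n d) (Omega n d) ℝ :=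
  Matrix.of fun X Y =>
    if X = Y then
      1 - ∑ Z : Omega n d,
        (if Z ≠ X ∧ IsSwitch X.val Z.val then (((d * n).choose 2 : ℕ) : ℝ)⁻¹ else 0)
    else if IsSwitch X.val Y.val then (((d * n).choose 2 : ℕ) : ℝ)⁻¹ else 0

/-!
Fix the target `T`. Every vertex has the same in- and out-degree in `X` and in `T`, so the arcs of
`X \ T` and of `T \ X` can be followed alternately, sharing heads and then tails, until the walk
closes up. On a shortest such walk, one or two switches near two consecutive arcs of `X \ T` either
remove an arc of `X \ T` for good, or keep `|X \ T|` and leave a strictly shorter alternating walk;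
so the pair (`|X \ T|`, length of a shortest alternating walk) decreases lexicographically until
`X = T`. The one configuration left is a walk of length three: an oriented triangle of `X` whose
reverse lies in `T`. Counting degrees around it yields a vertex outside the triangle (this is where
`n ≥ 4` is used) through which three or four switches reverse it.
-/

namespace SwitchChain

variable {n d : ℕ}

theorem card_eq_four_iff {α : Type*} [DecidableEq α] {i j k l : α} :
    ({i, j, k, l} : Finset α).card = 4 ↔ i ≠ j ∧ i ≠ k ∧ i ≠ l ∧ j ≠ k ∧ j ≠ l ∧ k ≠ l := by
  have h : ({i, j, k, l} : Finset α) = (i ::ₘ j ::ₘ k ::ₘ {l} : Multiset α).toFinset := by simp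
  have := Multiset.toFinset_card_eq_card_iff_nodup (m := (i ::ₘ j ::ₘ k ::ₘ {l} : Multiset α))
  simp only [Multiset.card_cons, Multiset.card_singleton, Multiset.nodup_cons, Multiset.mem_cons,
    Multiset.mem_singleton, Multiset.nodup_singleton] at this
  rw [h, this]
  tauto

theorem card_filter_sdiff_union {α : Type*} [DecidableEq α] {X A B : Finset α} (hA : A ⊆ X)
    (hB : Disjoint X B) (P : α → Prop) [DecidablePred P] :
    ((X \ A ∪ B).filter P).card + (A.filter P).card = (X.filter P).card + (B.filter P).card := by
  have hsd : (X \ A).filter P = X.filter P \ A.filter P := by ext; simp; tauto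
  have hsub := Finset.filter_subset_filter P hA
  rw [Finset.filter_union, Finset.card_union_of_disjoint ((hB.mono_left Finset.sdiff_subset).mono
    (Finset.filter_subset _ _) (Finset.filter_subset _ _)), hsd, Finset.card_sdiff_of_subset hsub]
  have := Finset.card_le_card hsub
  omega

theorem exists_mem_notMem_of_card_eq {α : Type*} {A B : Finset α} {a : α} (h : A.card = B.card)
    (ha : a ∈ A) (hb : a ∉ B) : ∃ b ∈ B, b ∉ A := by
  by_contra! hBA
  exact hb (Finset.eq_of_subset_of_card_le hBA h.le ▸ ha)

section Switch

variable {X Y : Finset (Fin n × Fin n)} {i j k l : Fin n}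

def switchArcs (X : Finset (Fin n × Fin n)) (i j k l : Fin n) : Finset (Fin n × Fin n) :=
  X \ {(i, j), (k, l)} ∪ {(i, l), (k, j)}

theorem mem_switchArcs {p : Fin n × Fin n} :
    p ∈ switchArcs X i j k l ↔ p ∈ X ∧ p ≠ (i, j) ∧ p ≠ (k, l) ∨ p = (i, l) ∨ p = (k, j) := by
  simp [switchArcs]
  tauto

def CanSwitch (X : Finset (Fin n × Fin n)) (i j k l : Fin n) : Prop :=
  (i, j) ∈ X ∧ (k, l) ∈ X ∧ (i, l) ∉ X ∧ (k, j) ∉ X ∧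
    i ≠ j ∧ i ≠ k ∧ i ≠ l ∧ j ≠ k ∧ j ≠ l ∧ k ≠ l

theorem isSwitch_switchArcs (i j k l : Fin n) (h : CanSwitch X i j k l) :
    IsSwitch X (switchArcs X i j k l) :=
  ⟨i, j, k, l, h.1, h.2.1, card_eq_four_iff.2 h.2.2.2.2, h.2.2.1, h.2.2.2.1, rfl⟩

theorem card_filter_switchArcs (h : CanSwitch X i j k l) (P : Fin n × Fin n → Prop)
    [DecidablePred P] :
    ((switchArcs X i j k l).filter P).card + (if P (i, j) then 1 else 0) +
        (if P (k, l) then 1 else 0) =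
      (X.filter P).card + (if P (i, l) then 1 else 0) + (if P (k, j) then 1 else 0) := by
  obtain ⟨hij, hkl, hil, hkj, -, hik, -⟩ := h
  have key := card_filter_sdiff_union (A := {(i, j), (k, l)}) (B := {(i, l), (k, j)})
    (X := X) (by simp [Finset.insert_subset_iff, hij, hkl]) (by simp [hil, hkj]) P
  rw [Finset.card_filter P {(i, j), (k, l)}, Finset.card_filter P {(i, l), (k, j)},
    Finset.sum_pair (by simp [hik]), Finset.sum_pair (by simp [hik])] at key
  unfold switchArcs
  omega

theorem card_sdiff_switchArcs (T : Finset (Fin n × Fin n)) (h : CanSwitch X i j k l) :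
    (switchArcs X i j k l \ T).card + (if (i, j) ∈ T then 0 else 1) +
        (if (k, l) ∈ T then 0 else 1) =
      (X \ T).card + (if (i, l) ∈ T then 0 else 1) + (if (k, j) ∈ T then 0 else 1) := by
  simpa only [Finset.sdiff_eq_filter, ite_not] using card_filter_switchArcs h (· ∉ T)

theorem _root_.IsRegularDigraph.of_isSwitch (hX : IsRegularDigraph n d X) (h : IsSwitch X Y) :
    IsRegularDigraph n d Y := by
  obtain ⟨i, j, k, l, hij, hkl, h4, hil, hkj, rfl⟩ := h
  have hs : CanSwitch X i j k l := ⟨hij, hkl, hil, hkj, card_eq_four_iff.1 h4⟩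
  obtain ⟨-, -, hil', hjk, -, -⟩ := card_eq_four_iff.1 h4
  refine ⟨fun a ha => ?_, fun v => ⟨?_, ?_⟩⟩
  · rcases mem_switchArcs.1 ha with ⟨ha, -⟩ | rfl | rfl
    exacts [hX.1 a ha, hil', hjk.symm]
  · have := card_filter_switchArcs hs (fun a => a.1 = v)
    have := (hX.2 v).1
    simp only [switchArcs] at *
    split_ifs at * <;> omega
  · have := card_filter_switchArcs hs (fun a => a.2 = v)
    have := (hX.2 v).2
    simp only [switchArcs] at *
    split_ifs at * <;> omega

abbrev SwitchReach (X Y : Finset (Fin n × Fin n)) : Prop :=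
  Relation.ReflTransGen IsSwitch X Y

theorem _root_.IsRegularDigraph.of_switchReach (hX : IsRegularDigraph n d X)
    (h : SwitchReach X Y) : IsRegularDigraph n d Y := by
  induction h with
  | refl => exact hX
  | tail _ hYZ ih => exact ih.of_isSwitch hYZ

theorem SwitchReach.lift (h : SwitchReach X Y) (hX : IsRegularDigraph n d X) :
    ∃ hY, Relation.ReflTransGen (fun A B : Omega n d => IsSwitch A.val B.val) ⟨X, hX⟩ ⟨Y, hY⟩ := by
  induction h with
  | refl => exact ⟨hX, .refl⟩
  | tail _ hYZ ih =>
    obtain ⟨hY, ih⟩ := ih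
    exact ⟨hY.of_isSwitch hYZ, ih.tail hYZ⟩

end Switch

section Neighbours

variable {X : Finset (Fin n × Fin n)} {u v w : Fin n}

def outNbrs (X : Finset (Fin n × Fin n)) (u : Fin n) : Finset (Fin n) :=
  Finset.univ.filter fun v => (u, v) ∈ X

def inNbrs (X : Finset (Fin n × Fin n)) (v : Fin n) : Finset (Fin n) :=
  Finset.univ.filter fun u => (u, v) ∈ X

@[simp] theorem mem_outNbrs : v ∈ outNbrs X u ↔ (u, v) ∈ X := by simp [outNbrs]

@[simp] theorem mem_inNbrs : u ∈ inNbrs X v ↔ (u, v) ∈ X := by simp [inNbrs]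

theorem _root_.IsRegularDigraph.card_outNbrs (hX : IsRegularDigraph n d X) (u : Fin n) :
    (outNbrs X u).card = d := by
  rw [← (hX.2 u).1]
  refine Finset.card_nbij' (fun v => (u, v)) Prod.snd ?_ ?_ ?_ ?_ <;> intro p <;> aesop

theorem _root_.IsRegularDigraph.card_inNbrs (hX : IsRegularDigraph n d X) (v : Fin n) :
    (inNbrs X v).card = d := by
  rw [← (hX.2 v).2]
  refine Finset.card_nbij' (fun u => (u, v)) Prod.fst ?_ ?_ ?_ ?_ <;> intro p <;> aesop

theorem _root_.IsRegularDigraph.card_eq (hX : IsRegularDigraph n d X) : X.card = n * d := by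
  rw [Finset.card_eq_sum_card_fiberwise (f := Prod.fst) (t := Finset.univ)
    (fun _ _ => Finset.mem_univ _)]
  simp [fun v => (hX.2 v).1]

theorem _root_.IsRegularDigraph.exists_outNbr_avoiding (hX : IsRegularDigraph n d X)
    {v₁ v₂ : Fin n} (hv : v₁ ≠ v₂) (h₁ : (w, v₁) ∈ X) (h₂ : (w, v₂) ∈ X) (h₃ : (u, v₁) ∉ X)
    (h₄ : (u, v₂) ∉ X) : ∃ v, (u, v) ∈ X ∧ (w, v) ∉ X ∧ v ≠ w := by
  have hsub : {v₁, v₂} ⊆ insert w (outNbrs X w) := by simp [Finset.insert_subset_iff, h₁, h₂]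
  obtain ⟨v, hv, hv'⟩ := Finset.exists_mem_notMem_of_card_lt_card
    (s := insert w (outNbrs X w) \ {v₁, v₂}) (t := outNbrs X u) (by
      rw [Finset.card_sdiff_of_subset hsub,
        Finset.card_insert_of_notMem (fun hw => hX.1 _ (mem_outNbrs.1 hw) rfl),
        Finset.card_pair hv, hX.card_outNbrs, hX.card_outNbrs]
      have : 0 < d := hX.card_outNbrs w ▸ Finset.card_pos.2 ⟨v₁, by simpa⟩
      omega)
  simp only [mem_outNbrs, Finset.mem_sdiff, Finset.mem_insert, Finset.mem_singleton] at hv hv'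
  exact ⟨v, hv, by grind, by grind⟩

end Neighbours

section Triangle

variable {X : Finset (Fin n × Fin n)} {a b c x y : Fin n}

structure IsOrientedTriangle (X : Finset (Fin n × Fin n)) (a b c : Fin n) : Prop where
  ab : (a, b) ∈ X
  bc : (b, c) ∈ X
  ca : (c, a) ∈ X
  ba : (b, a) ∉ X
  cb : (c, b) ∉ X
  ac : (a, c) ∉ X

theorem IsOrientedTriangle.rotate (H : IsOrientedTriangle X a b c) :
    IsOrientedTriangle X b c a :=
  ⟨H.bc, H.ca, H.ab, H.cb, H.ac, H.ba⟩

def reverseTriangle (X : Finset (Fin n × Fin n)) (a b c : Fin n) : Finset (Fin n × Fin n) :=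
  X \ {(a, b), (b, c), (c, a)} ∪ {(b, a), (c, b), (a, c)}

theorem mem_reverseTriangle {p : Fin n × Fin n} :
    p ∈ reverseTriangle X a b c ↔ p ∈ X ∧ p ≠ (a, b) ∧ p ≠ (b, c) ∧ p ≠ (c, a) ∨
      p = (b, a) ∨ p = (c, b) ∨ p = (a, c) := by
  simp [reverseTriangle]
  tauto

theorem reverseTriangle_rotate : reverseTriangle X b c a = reverseTriangle X a b c := by
  ext
  simp only [mem_reverseTriangle]
  tauto

-- In each switch sequence below the arcs at the outside vertices are moved and then restored,
-- while every arc of the triangle is turned once.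
theorem IsOrientedTriangle.switchReach_reverse_of_out (H : IsOrientedTriangle X a b c)
    (hxa : x ≠ a) (hxb : x ≠ b) (hxc : x ≠ c) (h₁ : (x, a) ∈ X) (h₂ : (x, b) ∉ X) :
    SwitchReach X (reverseTriangle X a b c) := by
  obtain ⟨hab, hbc, hca, hba, hcb, hac⟩ := H
  by_cases h₃ : (x, c) ∈ X
  · refine .head (isSwitch_switchArcs a b x c (by grind [CanSwitch, mem_switchArcs])) ?_
    refine .head (isSwitch_switchArcs b c x a (by grind [CanSwitch, mem_switchArcs])) ?_
    refine .head (isSwitch_switchArcs c a x b (by grind [CanSwitch, mem_switchArcs])) ?_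
    convert Relation.ReflTransGen.refl using 1
    ext
    simp only [mem_switchArcs, mem_reverseTriangle]
    grind
  · refine .head (isSwitch_switchArcs b c x a (by grind [CanSwitch, mem_switchArcs])) ?_
    refine .head (isSwitch_switchArcs a b x c (by grind [CanSwitch, mem_switchArcs])) ?_
    refine .head (isSwitch_switchArcs c a x b (by grind [CanSwitch, mem_switchArcs])) ?_
    convert Relation.ReflTransGen.refl using 1
    ext
    simp only [mem_switchArcs, mem_reverseTriangle]
    grind

theorem IsOrientedTriangle.switchReach_reverse_of_in (H : IsOrientedTriangle X a b c)
    (hxa : x ≠ a) (hxb : x ≠ b) (hxc : x ≠ c) (h₁ : (a, x) ∈ X) (h₂ : (b, x) ∉ X) :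
    SwitchReach X (reverseTriangle X a b c) := by
  obtain ⟨hab, hbc, hca, hba, hcb, hac⟩ := H
  by_cases h₃ : (c, x) ∈ X
  · refine .head (isSwitch_switchArcs b c a x (by grind [CanSwitch, mem_switchArcs])) ?_
    refine .head (isSwitch_switchArcs c x a b (by grind [CanSwitch, mem_switchArcs])) ?_
    refine .head (isSwitch_switchArcs b x c a (by grind [CanSwitch, mem_switchArcs])) ?_
    convert Relation.ReflTransGen.refl using 1
    ext
    simp only [mem_switchArcs, mem_reverseTriangle]
    grind
  · refine .head (isSwitch_switchArcs a x b c (by grind [CanSwitch, mem_switchArcs])) ?_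
    refine .head (isSwitch_switchArcs c a b x (by grind [CanSwitch, mem_switchArcs])) ?_
    refine .head (isSwitch_switchArcs a b c x (by grind [CanSwitch, mem_switchArcs])) ?_
    convert Relation.ReflTransGen.refl using 1
    ext
    simp only [mem_switchArcs, mem_reverseTriangle]
    grind

theorem IsOrientedTriangle.switchReach_reverse_of_path (H : IsOrientedTriangle X a b c)
    (hxa : x ≠ a) (hxb : x ≠ b) (hxc : x ≠ c) (hya : y ≠ a) (hyb : y ≠ b) (hyc : y ≠ c)
    (hxy : x ≠ y) (hxb' : (x, b) ∈ X) (hxc' : (x, c) ∈ X) (hby : (b, y) ∈ X) (hcy : (c, y) ∈ X)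
    (hxy' : (x, y) ∉ X) :
    SwitchReach X (reverseTriangle X a b c) := by
  obtain ⟨hab, hbc, hca, hba, hcb, hac⟩ := H
  refine .head (isSwitch_switchArcs x b c y (by grind [CanSwitch, mem_switchArcs])) ?_
  refine .head (isSwitch_switchArcs c a b y (by grind [CanSwitch, mem_switchArcs])) ?_
  refine .head (isSwitch_switchArcs a b x c (by grind [CanSwitch, mem_switchArcs])) ?_
  refine .head (isSwitch_switchArcs b c x y (by grind [CanSwitch, mem_switchArcs])) ?_
  convert Relation.ReflTransGen.refl using 1
  ext
  simp only [mem_switchArcs, mem_reverseTriangle]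
  grind

theorem IsOrientedTriangle.switchReach_reverse_of_arc (H : IsOrientedTriangle X a b c)
    (hxa : x ≠ a) (hxb : x ≠ b) (hxc : x ≠ c) (hya : y ≠ a) (hyb : y ≠ b) (hyc : y ≠ c)
    (hxy : (x, y) ∈ X) (hxy' : x ≠ y) (hay : (a, y) ∉ X) (hby : (b, y) ∉ X) (hcy : (c, y) ∉ X)
    (hxb' : (x, b) ∉ X) :
    SwitchReach X (reverseTriangle X a b c) := by
  obtain ⟨hab, hbc, hca, hba, hcb, hac⟩ := H
  refine .head (isSwitch_switchArcs a b x y (by grind [CanSwitch, mem_switchArcs])) ?_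
  refine .head (isSwitch_switchArcs b c a y (by grind [CanSwitch, mem_switchArcs])) ?_
  refine .head (isSwitch_switchArcs c a b y (by grind [CanSwitch, mem_switchArcs])) ?_
  refine .head (isSwitch_switchArcs c y x b (by grind [CanSwitch, mem_switchArcs])) ?_
  convert Relation.ReflTransGen.refl using 1
  ext
  simp only [mem_switchArcs, mem_reverseTriangle]
  grind

theorem IsOrientedTriangle.switchReach_reverse_of_degree_lt_two (hX : IsRegularDigraph n d X)
    (hn : 4 ≤ n) (hd : d < 2) (H : IsOrientedTriangle X a b c) :
    SwitchReach X (reverseTriangle X a b c) := by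
  have ⟨hab, hbc, hca, hba, hcb, hac⟩ := H
  have out_unique : ∀ u v w, (u, v) ∈ X → (u, w) ∈ X → v = w := fun u v w hv hw =>
    Finset.card_le_one.1 (by rw [hX.card_outNbrs]; omega) v (by simpa) w (by simpa)
  have in_unique : ∀ u v w, (u, w) ∈ X → (v, w) ∈ X → u = v := fun u v w hu hv =>
    Finset.card_le_one.1 (by rw [hX.card_inNbrs]; omega) u (by simpa) v (by simpa)
  obtain ⟨x, -, hx⟩ := Finset.exists_mem_notMem_of_card_lt_card (s := {a, b, c})
    (t := Finset.univ) (by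
      rw [Finset.card_univ, Fintype.card_fin]
      exact Finset.card_le_three.trans_lt (by omega))
  simp only [Finset.mem_insert, Finset.mem_singleton, not_or] at hx
  obtain ⟨y, hy⟩ : (outNbrs X x).Nonempty := by
    rw [← Finset.card_pos, hX.card_outNbrs, ← hX.card_outNbrs a]
    exact Finset.card_pos.2 ⟨b, by simpa⟩
  rw [mem_outNbrs] at hy
  have := hX.1 _ hy
  have := hX.1 _ hab
  have := hX.1 _ hbc
  have := hX.1 _ hca
  exact H.switchReach_reverse_of_arc hx.1 hx.2.1 hx.2.2 (by grind) (by grind) (by grind) hy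
    (hX.1 _ hy) (by grind) (by grind) (by grind) (by grind)

theorem IsOrientedTriangle.switchReach_reverse (hX : IsRegularDigraph n d X) (hn : 4 ≤ n)
    (H : IsOrientedTriangle X a b c) : SwitchReach X (reverseTriangle X a b c) := by
  rcases Nat.lt_or_ge d 2 with hd | hd
  · exact H.switchReach_reverse_of_degree_lt_two hX hn hd
  have ⟨hab, hbc, hca, hba, hcb, hac⟩ := H
  obtain ⟨x, hx⟩ : ((inNbrs X a).erase c).Nonempty := by
    rw [← Finset.card_pos, Finset.card_erase_of_mem (by simpa), hX.card_inNbrs]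
    omega
  simp only [Finset.mem_erase, mem_inNbrs] at hx
  have hxa : x ≠ a := hX.1 _ hx.2
  have hxb : x ≠ b := by rintro rfl; exact hba hx.2
  by_cases hxb' : (x, b) ∈ X
  swap
  · exact H.switchReach_reverse_of_out hxa hxb hx.1 hx.2 hxb'
  by_cases hxc' : (x, c) ∈ X
  swap
  · exact reverseTriangle_rotate ▸ H.rotate.switchReach_reverse_of_out hxb hx.1 hxa hxb' hxc'
  -- `a` has `d - 1` out-neighbours off the triangle, `x` only `d - 3`
  have hsub : {a, b, c} ⊆ outNbrs X x := by simp [Finset.insert_subset_iff, hx.2, hxb', hxc']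
  obtain ⟨y, hy, hy'⟩ := Finset.exists_mem_notMem_of_card_lt_card
    (s := insert x (outNbrs X x \ {a, b, c})) (t := (outNbrs X a).erase b) (by
      have h3 : ({a, b, c} : Finset (Fin n)).card = 3 :=
        Finset.card_eq_three.2 ⟨a, b, c, hX.1 _ hab, (hX.1 _ hca).symm, hX.1 _ hbc, rfl⟩
      have := Finset.card_le_card hsub
      have := Finset.card_insert_le x (outNbrs X x \ {a, b, c})
      rw [Finset.card_sdiff_of_subset hsub, h3, hX.card_outNbrs] at *
      rw [Finset.card_erase_of_mem (by simpa), hX.card_outNbrs]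
      omega)
  simp only [Finset.mem_erase, mem_outNbrs, Finset.mem_insert, Finset.mem_sdiff,
    Finset.mem_singleton, not_or, not_and, not_not] at hy hy'
  have hya : y ≠ a := (hX.1 _ hy.2).symm
  have hyc : y ≠ c := by rintro rfl; exact hac hy.2
  have hxy : (x, y) ∉ X := fun h => by grind
  by_cases hby : (b, y) ∈ X
  swap
  · exact H.switchReach_reverse_of_in hya hy.1 hyc hy.2 hby
  by_cases hcy : (c, y) ∈ X
  swap
  · exact reverseTriangle_rotate ▸ H.rotate.switchReach_reverse_of_in hy.1 hyc hya hby hcy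
  exact H.switchReach_reverse_of_path hxa hxb hx.1 hya hy.1 hyc (Ne.symm hy'.1) hxb' hxc' hby hcy
    hxy

end Triangle

section AltWalk

variable {T X Y : Finset (Fin n × Fin n)} {m : ℕ} {t h : ℕ → Fin n}

/-- A closed walk of length `m` alternating between the arcs `(t x, h x)` of `X \ T` and the
arcs `(t (x + 1), h x)` of `T \ X`; it closes up because the tails repeat with period `m`. -/
structure IsAltWalk (T X : Finset (Fin n × Fin n)) (m : ℕ) (t h : ℕ → Fin n) : Prop where
  periodic : Function.Periodic t m
  blue : ∀ x, (t x, h x) ∈ X \ T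
  red : ∀ x, (t (x + 1), h x) ∈ T \ X

def HasAltWalk (T X : Finset (Fin n × Fin n)) (m : ℕ) : Prop :=
  ∃ t h, IsAltWalk T X m t h

noncomputable def altLength (T X : Finset (Fin n × Fin n)) : ℕ :=
  sInf {m | 0 < m ∧ HasAltWalk T X m}

theorem altLength_le (hw : HasAltWalk T X m) (hm : 0 < m) : altLength T X ≤ m :=
  Nat.sInf_le ⟨hm, hw⟩

theorem HasAltWalk.hasAltWalk_altLength (hw : HasAltWalk T X m) (hm : 0 < m) :
    0 < altLength T X ∧ HasAltWalk T X (altLength T X) :=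
  Nat.sInf_mem (s := {m | 0 < m ∧ HasAltWalk T X m}) ⟨m, hm, hw⟩

theorem hasAltWalk_of_window (hm : 0 < m) (F H : ℕ → Fin n)
    (blue : ∀ r < m, (F r, H r) ∈ X \ T) (red : ∀ r, r + 1 < m → (F (r + 1), H r) ∈ T \ X)
    (close : (F 0, H (m - 1)) ∈ T \ X) : HasAltWalk T X m := by
  refine ⟨fun x => F (x % m), fun x => H (x % m), fun x => by simp,
    fun x => blue _ (Nat.mod_lt _ hm), fun x => ?_⟩
  rw [← Nat.mod_add_mod]
  rcases (show x % m + 1 < m ∨ x % m + 1 = m by have := Nat.mod_lt x hm; omega) with hlt | heq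
  · rw [Nat.mod_eq_of_lt hlt]
    exact red _ hlt
  · rw [heq, Nat.mod_self, show x % m = m - 1 by omega]
    exact close

theorem IsAltWalk.one_lt (hw : IsAltWalk T X m t h) (hm : 0 < m) : 1 < m := by
  by_contra!
  have := hw.periodic 0
  have := Finset.mem_sdiff.1 (hw.red 0)
  simp_all [show m = 1 by omega, (Finset.mem_sdiff.1 (hw.blue 0)).1]

theorem IsAltWalk.shift (hw : IsAltWalk T X m t h) (a : ℕ) :
    IsAltWalk T X m (fun x => t (a + x)) (fun x => h (a + x)) :=
  ⟨hw.periodic.const_add a, fun x => hw.blue (a + x), fun x => hw.red (a + x)⟩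

theorem IsAltWalk.tail_ne (hw : IsAltWalk T X m t h) (hm : altLength T X = m) {x y : ℕ}
    (hxy : x < y) (hy : y < x + m) : t x ≠ t y := by
  intro hxy'
  have : HasAltWalk T X (y - x) := hasAltWalk_of_window (by omega) (fun r => t (x + r))
    (fun r => h (x + r)) (fun r _ => hw.blue _) (fun r _ => hw.red _) (by
      simpa [hxy', show x + (y - x - 1) + 1 = y by omega] using hw.red (x + (y - x - 1)))
  have := altLength_le this (by omega)
  omega

theorem exists_hasAltWalk (hX : IsRegularDigraph n d X) (hT : IsRegularDigraph n d T)
    (hne : (X \ T).Nonempty) : ∃ m, 0 < m ∧ HasAltWalk T X m := by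
  have red_into : ∀ p : ↥(X \ T), ∃ w, (w, p.1.2) ∈ T \ X := fun ⟨(u, v), huv⟩ => by
    obtain ⟨w, hw, hw'⟩ := exists_mem_notMem_of_card_eq (A := inNbrs X v) (B := inNbrs T v)
      (by rw [hX.card_inNbrs, hT.card_inNbrs]) (a := u) (by simp_all) (by simp_all)
    exact ⟨w, by simp_all⟩
  choose w hw using red_into
  have blue_out : ∀ p : ↥(X \ T), ∃ z, (w p, z) ∈ X \ T := fun p => by
    obtain ⟨z, hz, hz'⟩ := exists_mem_notMem_of_card_eq (A := outNbrs T (w p))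
      (B := outNbrs X (w p)) (by rw [hX.card_outNbrs, hT.card_outNbrs]) (a := p.1.2)
      (by simp_all [Finset.mem_sdiff.1 (hw p)]) (by simp_all [Finset.mem_sdiff.1 (hw p)])
    exact ⟨z, by simp_all⟩
  choose z hz using blue_out
  let next (p : ↥(X \ T)) : ↥(X \ T) := ⟨(w p, z p), hz p⟩
  obtain ⟨p₀, hp₀⟩ := hne
  have walk_of_eq : ∀ i j, i < j → next^[i] ⟨p₀, hp₀⟩ = next^[j] ⟨p₀, hp₀⟩ →
      ∃ m, 0 < m ∧ HasAltWalk T X m := by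
    intro i j hij heq
    set q := next^[i] ⟨p₀, hp₀⟩
    have hq : next^[j - i] q = q := by
      rw [← Function.iterate_add_apply, Nat.sub_add_cancel hij.le, ← heq]
    refine ⟨j - i, by omega, fun x => (next^[x] q).1.1, fun x => (next^[x] q).1.2,
      fun x => by simp only [Function.iterate_add_apply, hq], fun x => (next^[x] q).2,
      fun x => ?_⟩
    simpa only [Function.iterate_succ_apply'] using hw (next^[x] q)
  obtain ⟨i, j, hij, heq⟩ := Finite.exists_ne_map_eq_of_infinite fun s => next^[s] ⟨p₀, hp₀⟩
  rcases lt_or_gt_of_ne hij with hlt | hlt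
  exacts [walk_of_eq i j hlt heq, walk_of_eq j i hlt heq.symm]

end AltWalk

section Descent

variable {T X Y : Finset (Fin n × Fin n)} {m : ℕ} {t h : ℕ → Fin n}

noncomputable def potential (T X : Finset (Fin n × Fin n)) : ℕ ×ₗ ℕ :=
  toLex ((X \ T).card, altLength T X)

def Improvable (T X : Finset (Fin n × Fin n)) : Prop :=
  ∃ Y, SwitchReach X Y ∧ potential T Y < potential T X

theorem improvable_of_card_lt (hXY : SwitchReach X Y) (h : (Y \ T).card < (X \ T).card) :
    Improvable T X :=
  ⟨Y, hXY, Prod.Lex.toLex_lt_toLex.2 (Or.inl h)⟩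

theorem improvable_of_card_eq (hXY : SwitchReach X Y) (h : (Y \ T).card = (X \ T).card)
    (hw : HasAltWalk T Y m) (hm : 0 < m) (hlt : m < altLength T X) : Improvable T X :=
  ⟨Y, hXY, Prod.Lex.toLex_lt_toLex.2 (Or.inr ⟨h, (altLength_le hw hm).trans_lt hlt⟩)⟩

theorem improvable_of_tail_ne_head (hX : IsRegularDigraph n d X) (hT : IsRegularDigraph n d T)
    (hw : IsAltWalk T X m t h) (hm : altLength T X = m) (hm₀ : 0 < m) (h01 : t 0 ≠ h 1) :
    Improvable T X := by
  have b₀ := Finset.mem_sdiff.1 (hw.blue 0)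
  have b₁ := Finset.mem_sdiff.1 (hw.blue 1)
  have r₀ : (t 1, h 0) ∈ T ∧ (t 1, h 0) ∉ X := Finset.mem_sdiff.1 (hw.red 0)
  have r₁ : (t 2, h 1) ∈ T ∧ (t 2, h 1) ∉ X := Finset.mem_sdiff.1 (hw.red 1)
  have := hX.1 _ b₀.1
  have := hX.1 _ b₁.1
  have := hT.1 _ r₀.1
  have := hT.1 _ r₁.1
  by_cases hc : (t 0, h 1) ∈ X
  swap
  · have hs : CanSwitch X (t 0) (h 0) (t 1) (h 1) := by grind [CanSwitch]
    refine improvable_of_card_lt (.single (isSwitch_switchArcs _ _ _ _ hs)) ?_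
    have := card_sdiff_switchArcs T hs
    grind
  by_cases hcT : (t 0, h 1) ∈ T
  swap
  · -- the chord replaces two blue arcs and the red arc between them
    have hm₁ := hw.one_lt hm₀
    have hw' : HasAltWalk T X (m - 1) := hasAltWalk_of_window (by omega)
      (fun r => if r = 0 then t 0 else t (r + 1)) (fun r => h (r + 1))
      (fun r _ => by split_ifs with hr <;> simp_all [hw.blue (r + 1)])
      (fun r _ => hw.red (r + 1))
      (by simpa [show m - 1 - 1 + 1 = m - 1 by omega, Nat.sub_add_cancel hm₀,
        hw.periodic.eq] using hw.red (m - 1))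
    have := altLength_le hw' (by omega)
    omega
  by_cases h20 : (t 2, h 0) ∈ X
  · have := hX.1 _ h20
    have hs : CanSwitch X (t 2) (h 0) (t 1) (h 1) := by grind [CanSwitch]
    refine improvable_of_card_lt (.single (isSwitch_switchArcs _ _ _ _ hs)) ?_
    have := card_sdiff_switchArcs T hs
    grind
  -- the chord is shared: trade it for the red arc `(t 2, h 1)` via an arc `(t 2, v)`, then put it
  -- back by switching the two blue arcs
  obtain ⟨v, hv, hv', hvt⟩ := hX.exists_outNbr_avoiding (by grind) b₀.1 hc h20 r₁.2
  have := hX.1 _ hv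
  have hs₁ : CanSwitch X (t 0) (h 1) (t 2) v := by grind [CanSwitch]
  have hs₂ : CanSwitch (switchArcs X (t 0) (h 1) (t 2) v) (t 0) (h 0) (t 1) (h 1) := by
    grind [CanSwitch, mem_switchArcs]
  refine improvable_of_card_lt (.head (isSwitch_switchArcs _ _ _ _ hs₁)
    (.single (isSwitch_switchArcs _ _ _ _ hs₂))) ?_
  have := card_sdiff_switchArcs T hs₁
  have := card_sdiff_switchArcs T hs₂
  grind

theorem hasAltWalk_shortcut {k : ℕ} (hk : k < m) (hper : t (m + 1) = t 1)
    (h₀ : (t 1, t k) ∈ Y \ T) (blue : ∀ i, k < i → i < m → (t (i + 1), t i) ∈ Y \ T)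
    (red : ∀ i, k ≤ i → i < m → (t (i + 2), t i) ∈ T \ Y) : HasAltWalk T Y (m - k) :=
  hasAltWalk_of_window (by omega) (fun r => if r = 0 then t 1 else t (k + r + 1))
    (fun r => t (k + r))
    (fun r hr => by
      split_ifs with hr₀
      · simpa [hr₀] using h₀
      · exact blue _ (by omega) (by omega))
    (fun r hr => by simpa [add_assoc] using red (k + r) (by omega) (by omega))
    (by simpa [show k + (m - k - 1) = m - 1 by omega, show m - 1 + 2 = m + 1 by omega, hper]
      using red (m - 1) (by omega) (by omega))

theorem improvable_of_tail_eq_head (hw : IsAltWalk T X m t h) (hht : ∀ x, t x = h (x + 1))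
    (hm : altLength T X = m) (hm₄ : 4 ≤ m) : Improvable T X := by
  have blue : ∀ i, (t (i + 1), t i) ∈ X \ T := fun i => hht i ▸ hw.blue (i + 1)
  have red : ∀ i, (t (i + 2), t i) ∈ T \ X := fun i => hht i ▸ hw.red (i + 1)
  have tne : ∀ i j, i < j → j < i + m → t i ≠ t j := fun i j => hw.tail_ne hm
  have hper : t (m + 1) = t 1 := by simpa [add_comm] using hw.periodic 1
  have b := fun i => Finset.mem_sdiff.1 (blue i)
  have r := fun i => Finset.mem_sdiff.1 (red i)
  have := b 0; have := b 1; have := b 2; have := r 0; have := r 1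
  have := tne 0 1; have := tne 0 2; have := tne 0 3; have := tne 1 2; have := tne 1 3
  have := tne 2 3
  simp only [zero_add, Nat.reduceAdd] at *
  by_cases hA : (t 3, t 0) ∈ X
  · have hs : CanSwitch X (t 2) (t 1) (t 3) (t 0) := by grind [CanSwitch]
    refine improvable_of_card_lt (.single (isSwitch_switchArcs _ _ _ _ hs)) ?_
    have := card_sdiff_switchArcs T hs
    grind
  have hlast : (t 1, t (m - 3 + 2)) ∉ X := by
    simpa [show m - 3 + 2 = m - 1 by omega, show m - 1 + 2 = m + 1 by omega, hper]
      using (r (m - 1)).2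
  have hex : ∃ k, (t 1, t (k + 2)) ∉ X := ⟨_, hlast⟩
  obtain ⟨k₀, hspec, hle, hmin⟩ : ∃ k₀, (t 1, t (k₀ + 2)) ∉ X ∧ k₀ ≤ m - 3 ∧
      ∀ k < k₀, (t 1, t (k + 2)) ∈ X :=
    ⟨Nat.find hex, Nat.find_spec hex, Nat.find_min' hex hlast,
      fun k hk => not_not.1 (Nat.find_min hex hk)⟩
  rcases k₀ with _ | k
  · have hs₁ : CanSwitch X (t 3) (t 2) (t 1) (t 0) := by grind [CanSwitch]
    have hs₂ : CanSwitch (switchArcs X (t 3) (t 2) (t 1) (t 0)) (t 3) (t 0) (t 2) (t 1) := by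
      grind [CanSwitch, mem_switchArcs]
    refine improvable_of_card_lt (.head (isSwitch_switchArcs _ _ _ _ hs₁)
      (.single (isSwitch_switchArcs _ _ _ _ hs₂))) ?_
    have := card_sdiff_switchArcs T hs₁
    have := card_sdiff_switchArcs T hs₂
    grind
  have hk₂ := hmin k k.lt_succ_self
  have hk₃ : (t 1, t (k + 3)) ∉ X := hspec
  have := b (k + 3); have := r (k + 2)
  have := tne 1 (k + 2); have := tne 1 (k + 3); have := tne 1 (k + 4)
  have := tne (k + 2) (k + 3); have := tne (k + 2) (k + 4); have := tne (k + 3) (k + 4)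
  simp only [add_assoc, Nat.reduceAdd] at *
  by_cases hkT : (t 1, t (k + 2)) ∈ T
  swap
  · -- a blue chord `(t 1, t (k + 2))` would shorten the walk
    have := altLength_le (hasAltWalk_shortcut (Y := X) (k := k + 2) (by omega) hper
      (by simp [hk₂, hkT]) (fun i _ _ => blue i) (fun i _ _ => red i)) (by omega)
    omega
  -- switching the chord against the blue arc at `k + 3` either gains an arc of `T`, or leaves
  -- an alternating walk that jumps from `t 1` straight to `t (k + 3)`
  have hs : CanSwitch X (t 1) (t (k + 2)) (t (k + 4)) (t (k + 3)) := by grind [CanSwitch]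
  have hcard := card_sdiff_switchArcs T hs
  by_cases hk₃T : (t 1, t (k + 3)) ∈ T
  · exact improvable_of_card_lt (.single (isSwitch_switchArcs _ _ _ _ hs)) (by grind)
  refine improvable_of_card_eq (.single (isSwitch_switchArcs _ _ _ _ hs)) (by grind)
    (hasAltWalk_shortcut (k := k + 3) (by omega) hper (by simp [mem_switchArcs, hk₃T]) ?_ ?_)
    (by omega) (by omega)
  · intro i hi hi'
    have := tne (k + 3) i (by omega) (by omega)
    have := b i
    grind [mem_switchArcs]
  · intro i hi hi'
    have := tne (k + 2) i (by omega) (by omega)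
    refine Finset.mem_sdiff.2 ⟨(r i).1, ?_⟩
    simp only [mem_switchArcs, Prod.mk.injEq, not_or]
    grind

theorem improvable_of_triangle (hn : 4 ≤ n) (hX : IsRegularDigraph n d X) {a b c : Fin n}
    (H : IsOrientedTriangle X a b c) (hab : (a, b) ∉ T) (hba : (b, a) ∈ T) (hcb : (c, b) ∈ T)
    (hac : (a, c) ∈ T) : Improvable T X := by
  refine improvable_of_card_lt (H.switchReach_reverse hX hn) ?_
  have key := card_filter_sdiff_union (X := X) (A := {(a, b), (b, c), (c, a)})
    (B := {(b, a), (c, b), (a, c)}) (by simp [Finset.insert_subset_iff, H.ab, H.bc, H.ca])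
    (by simp [H.ba, H.cb, H.ac]) (· ∉ T)
  have h₁ : 0 < (({(a, b), (b, c), (c, a)} : Finset _).filter (· ∉ T)).card :=
    Finset.card_pos.2 ⟨(a, b), by simp [hab]⟩
  have h₂ : (({(b, a), (c, b), (a, c)} : Finset _).filter (· ∉ T)).card = 0 := by
    simp [hba, hcb, hac]
  simp only [reverseTriangle, Finset.sdiff_eq_filter _ T]
  omega

theorem improvable (hn : 4 ≤ n) (hX : IsRegularDigraph n d X) (hT : IsRegularDigraph n d T)
    (hne : X ≠ T) : Improvable T X := by
  have hXT : (X \ T).Nonempty := by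
    rw [Finset.nonempty_iff_ne_empty, Ne, Finset.sdiff_eq_empty_iff_subset]
    exact fun hsub => hne (Finset.eq_of_subset_of_card_le hsub (by rw [hX.card_eq, hT.card_eq]))
  obtain ⟨m, hm, hwm⟩ := exists_hasAltWalk hX hT hXT
  obtain ⟨hpos, t, h, hw⟩ := hwm.hasAltWalk_altLength hm
  by_cases hth : ∃ a, t a ≠ h (a + 1)
  · obtain ⟨a, ha⟩ := hth
    exact improvable_of_tail_ne_head hX hT (hw.shift a) rfl hpos (by simpa using ha)
  push Not at hth
  have blue : ∀ i, (t (i + 1), t i) ∈ X \ T := fun i => hth i ▸ hw.blue (i + 1)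
  have red : ∀ i, (t (i + 2), t i) ∈ T \ X := fun i => hth i ▸ hw.red (i + 1)
  have hm₂ : altLength T X ≠ 2 := fun h2 =>
    hT.1 _ (Finset.mem_sdiff.1 (red 0)).1 (by simpa [h2] using hw.periodic 0)
  rcases (show altLength T X = 3 ∨ 4 ≤ altLength T X by have := hw.one_lt hpos; omega)
    with h3 | h4
  · have h₃ : t 3 = t 0 := by simpa [h3] using hw.periodic 0
    have h₄ : t 4 = t 1 := by simpa [h3] using hw.periodic 1
    have b₀ := Finset.mem_sdiff.1 (blue 0)
    have b₁ := Finset.mem_sdiff.1 (blue 1)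
    have b₂ := Finset.mem_sdiff.1 (h₃ ▸ blue 2 : (t 0, t 2) ∈ X \ T)
    have r₀ := Finset.mem_sdiff.1 (red 0)
    have r₁ := Finset.mem_sdiff.1 (h₃ ▸ red 1 : (t 0, t 1) ∈ T \ X)
    have r₂ := Finset.mem_sdiff.1 (h₄ ▸ red 2 : (t 1, t 2) ∈ T \ X)
    exact improvable_of_triangle hn hX ⟨b₀.1, b₂.1, b₁.1, r₁.2, r₀.2, r₂.2⟩ b₀.2 r₁.1 r₀.1 r₂.1
  · exact improvable_of_tail_eq_head hw hth rfl h4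

end Descent

theorem switchReach_of_isRegular (hn : 4 ≤ n) {T X : Finset (Fin n × Fin n)}
    (hT : IsRegularDigraph n d T) (hX : IsRegularDigraph n d X) : SwitchReach X T := by
  induction X using (InvImage.wf (potential T) wellFounded_lt).induction with
  | _ X ih =>
    by_cases hXT : X = T
    · exact hXT ▸ .refl
    obtain ⟨Y, hXY, hlt⟩ := improvable hn hX hT hXT
    exact hXY.trans (ih Y hlt (hX.of_switchReach hXY))

end SwitchChain

theorem switch_chain_connected_general (n d : ℕ) (hn : 4 ≤ n) (G G' : Omega n d) :
    Relation.ReflTransGen (fun X Y : Omega n d => IsSwitch X.val Y.val) G G' :=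
  ((SwitchChain.switchReach_of_isRegular hn G'.2 G.2).lift G.2).choose_spec

/-- For `n ≥ 4` and `1 ≤ d ≤ n-1`, the set `Ω_{n,d}` is connected
under switches: any `G' ∈ Ω_{n,d}` can be reached from any `G ∈ Ω_{n,d}` by a finite
sequence of switches, all intermediate digraphs being in `Ω_{n,d}`. -/
theorem switch_chain_connected (n d : ℕ) (hn : 4 ≤ n)
    (hd1 : 1 ≤ d) (hd2 : d ≤ n - 1) (G G' : Omega n d) :
    Relation.ReflTransGen (fun X Y : Omega n d => IsSwitch X.val Y.val) G G' :=
  switch_chain_connected_general n d hn G G'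
end

section
/- Let n ≥ 4 and 1 ≤ d ≤ n−1, and let N = |Ω_{n,d}|. The smallest eigenvalue λ_{N−1} of the switch chain on Ω_{n,d} satisfies (1 + λ_{N−1})^{-1} ≤ (1/4)·d²·n², i.e. λ_{N−1} ≥ −1 + 4/(d²n²). -/
attribute [local instance] Classical.propDecidable

/-!
Every row of the switch matrix `P` sums to `1` with nonnegative off-diagonal entries, so by
Gershgorin each eigenvalue satisfies `λ ≥ 2 P(X,X) - 1` for some `X`. The holding probability
`P(X,X)` is at least `1 / binom(dn,2)`: every switch neighbour of `X` comes from an unordered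
pair of arcs of `X`, and a pair of consecutive arcs `(u,v), (v,w)` never yields one. Hence
`λ ≥ -1 + 2 / binom(dn,2) ≥ -1 + 4 / (dn)²`.
-/

open Finset

theorem Matrix.two_mul_sub_one_le_of_hasEigenvalue {ι : Type*} [Fintype ι] [DecidableEq ι]
    (A : Matrix ι ι ℝ) {c μ : ℝ} (hoff : ∀ i j, i ≠ j → 0 ≤ A i j)
    (hrow : ∀ i, ∑ j, A i j = 1) (hdiag : ∀ i, c ≤ A i i)
    (hμ : Module.End.HasEigenvalue (Matrix.toLin' A) μ) : 2 * c - 1 ≤ μ := by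
  obtain ⟨k, hk⟩ := eigenvalue_mem_ball hμ
  have hradius : ∑ j ∈ univ.erase k, ‖A k j‖ = 1 - A k k := by
    rw [← hrow k, ← add_sum_erase _ _ (mem_univ k), add_sub_cancel_left]
    refine sum_congr rfl fun j hj => Real.norm_of_nonneg (hoff k j ?_)
    exact (ne_of_mem_erase hj).symm
  rw [Metric.mem_closedBall, Real.dist_eq, hradius] at hk
  linarith [(abs_le.mp hk).1, hdiag k]

section Switch

variable {n d : ℕ}

def switchArcs (G : Finset (Fin n × Fin n)) (a b : Fin n × Fin n) : Finset (Fin n × Fin n) :=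
  (G \ {a, b}) ∪ {(a.1, b.2), (b.1, a.2)}

theorem switchArcs_comm (G : Finset (Fin n × Fin n)) (a b : Fin n × Fin n) :
    switchArcs G a b = switchArcs G b a := by
  rw [switchArcs, switchArcs, pair_comm a, pair_comm (a.1, b.2)]

theorem IsSwitch.exists_eq_switchArcs {G G' : Finset (Fin n × Fin n)} (h : IsSwitch G G') :
    ∃ a ∈ G, ∃ b ∈ G, a ≠ b ∧ a.2 ≠ b.1 ∧ b.2 ≠ a.1 ∧ G' = switchArcs G a b := by
  obtain ⟨i, j, k, l, hij, hkl, hcard, -, -, rfl⟩ := h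
  have hik : i ≠ k := by rintro rfl; grind [card_le_three]
  have hjk : j ≠ k := by rintro rfl; grind [card_le_three]
  have hli : l ≠ i := by rintro rfl; grind [card_le_three]
  exact ⟨(i, j), hij, (k, l), hkl, fun h => hik (Prod.ext_iff.mp h).1, hjk, hli, rfl⟩

theorem IsRegularDigraph.card_eq_s9 {A : Finset (Fin n × Fin n)} (h : IsRegularDigraph n d A) :
    #A = d * n := by
  rw [card_eq_sum_card_fiberwise (f := Prod.fst) (t := univ) fun _ _ => mem_univ _]
  simp [fun v => (h.2 v).1, mul_comm]

theorem IsRegularDigraph.exists_adjacent_arcs {A : Finset (Fin n × Fin n)}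
    (h : IsRegularDigraph n d A) (hd : 0 < d) (hn : 0 < n) :
    ∃ a ∈ A, ∃ b ∈ A, a ≠ b ∧ a.2 = b.1 := by
  have out_arc (v : Fin n) : ∃ a ∈ A, a.1 = v := by
    obtain ⟨a, ha⟩ := card_pos.mp ((h.2 v).1 ▸ hd)
    exact ⟨a, (mem_filter.mp ha).1, (mem_filter.mp ha).2⟩
  obtain ⟨a, ha, -⟩ := out_arc ⟨0, hn⟩
  obtain ⟨b, hb, hab⟩ := out_arc a.2
  exact ⟨a, ha, b, hb, fun heq => h.1 a ha (heq ▸ hab), hab.symm⟩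

noncomputable def switchNeighbors (X : Omega n d) : Finset (Omega n d) :=
  univ.filter fun Z => Z ≠ X ∧ IsSwitch X.val Z.val

theorem card_switchNeighbors_lt (hd : 0 < d) (hn : 0 < n) (X : Omega n d) :
    #(switchNeighbors X) < (d * n).choose 2 := by
  obtain ⟨a, ha, b, hb, hab, hadj⟩ := X.2.exists_adjacent_arcs hd hn
  set pairs := X.val.offDiag.image Sym2.mk.uncurry
  have mem_pairs {a' b'} (ha' : a' ∈ X.val) (hb' : b' ∈ X.val) (hne : a' ≠ b') :
      s(a', b') ∈ pairs :=
    mem_image.mpr ⟨(a', b'), mem_offDiag.mpr ⟨ha', hb', hne⟩, rfl⟩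
  let switchOf : Sym2 (Fin n × Fin n) → Finset (Fin n × Fin n) :=
    Sym2.lift ⟨switchArcs X.val, switchArcs_comm X.val⟩
  have hsub : (switchNeighbors X).map (Function.Embedding.subtype _) ⊆
      (pairs.erase s(a, b)).image switchOf := by
    intro G hG
    obtain ⟨Z, hZ, rfl⟩ := mem_map.mp hG
    obtain ⟨a', ha', b', hb', hne, h1, h2, hZ⟩ := (mem_filter.mp hZ).2.2.exists_eq_switchArcs
    refine mem_image.mpr ⟨s(a', b'), mem_erase.mpr ⟨?_, mem_pairs ha' hb' hne⟩, hZ.symm⟩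
    rintro h
    rcases Sym2.eq_iff.mp h with ⟨rfl, rfl⟩ | ⟨rfl, rfl⟩
    · exact h1 hadj
    · exact h2 hadj
  calc #(switchNeighbors X) = #((switchNeighbors X).map (Function.Embedding.subtype _)) :=
        (card_map _).symm
    _ ≤ #((pairs.erase s(a, b)).image switchOf) := card_le_card hsub
    _ ≤ #(pairs.erase s(a, b)) := card_image_le
    _ < #pairs := card_erase_lt_of_mem (mem_pairs ha hb hab)
    _ = (d * n).choose 2 := by rw [Sym2.card_image_offDiag, X.2.card_eq_s9]

theorem switchP_apply_of_ne {X Y : Omega n d} (h : X ≠ Y) :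
    switchP n d X Y = if IsSwitch X.val Y.val then (((d * n).choose 2 : ℕ) : ℝ)⁻¹ else 0 := by
  simp [switchP, h]

theorem switchP_nonneg_of_ne {X Y : Omega n d} (h : X ≠ Y) : 0 ≤ switchP n d X Y := by
  rw [switchP_apply_of_ne h]
  split_ifs <;> positivity

theorem sum_switchP_erase_self (X : Omega n d) :
    ∑ Y ∈ univ.erase X, switchP n d X Y =
      #(switchNeighbors X) * (((d * n).choose 2 : ℕ) : ℝ)⁻¹ := by
  rw [switchNeighbors, ← nsmul_eq_mul, ← sum_const, sum_filter, ← add_sum_erase _ _ (mem_univ X)]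
  simp only [ne_eq, not_true_eq_false, false_and, if_false, zero_add]
  refine sum_congr rfl fun Y hY => ?_
  rw [switchP_apply_of_ne (ne_of_mem_erase hY).symm]
  simp only [ne_of_mem_erase hY, not_false_eq_true, true_and]

theorem switchP_apply_self (X : Omega n d) :
    switchP n d X X = 1 - #(switchNeighbors X) * (((d * n).choose 2 : ℕ) : ℝ)⁻¹ := by
  simp [switchP, switchNeighbors, sum_ite]

theorem sum_switchP_row (X : Omega n d) : ∑ Y, switchP n d X Y = 1 := by
  rw [← add_sum_erase _ _ (mem_univ X), sum_switchP_erase_self, switchP_apply_self, sub_add_cancel]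

theorem inv_choose_le_switchP_apply_self (hd : 0 < d) (hn : 0 < n) (X : Omega n d) :
    (((d * n).choose 2 : ℕ) : ℝ)⁻¹ ≤ switchP n d X X := by
  have hlt := card_switchNeighbors_lt hd hn X
  have hC : (0 : ℝ) < ((d * n).choose 2 : ℕ) := Nat.cast_pos.mpr (pos_of_gt hlt)
  rw [switchP_apply_self, le_sub_iff_add_le, ← one_add_mul, ← div_eq_mul_inv, div_le_one hC]
  norm_cast
  omega

end Switch

theorem switch_chain_smallest_eigenvalue_general (n d : ℕ) (hn : 4 ≤ n)
    (hd1 : 1 ≤ d) (lam : ℝ)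
    (hlam : ∃ ψ : Omega n d → ℝ, ψ ≠ 0 ∧ (switchP n d).mulVec ψ = lam • ψ) :
    (1 + lam)⁻¹ ≤ (1 / 4) * (d : ℝ) ^ 2 * (n : ℝ) ^ 2 ∧
      -1 + 4 / ((d : ℝ) ^ 2 * (n : ℝ) ^ 2) ≤ lam := by
  obtain ⟨ψ, hψ0, hψ⟩ := hlam
  have hn0 : 0 < n := by omega
  have hEigen : Module.End.HasEigenvalue (Matrix.toLin' (switchP n d)) lam :=
    Module.End.hasEigenvalue_of_hasEigenvector
      ⟨Module.End.mem_eigenspace_iff.mpr (by rwa [Matrix.toLin'_apply]), hψ0⟩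
  have hlow := (switchP n d).two_mul_sub_one_le_of_hasEigenvalue
    (fun _ _ => switchP_nonneg_of_ne) sum_switchP_row
    (inv_choose_le_switchP_apply_self hd1 hn0) hEigen
  set C : ℝ := (((d * n).choose 2 : ℕ) : ℝ)
  have hC : 0 < C := Nat.cast_pos.mpr (Nat.choose_pos (by nlinarith))
  have hC_le : C ≤ (d : ℝ) ^ 2 * (n : ℝ) ^ 2 / 2 := by
    simpa [mul_pow] using Nat.choose_le_pow_div (α := ℝ) 2 (d * n)
  have hbound : -1 + 4 / ((d : ℝ) ^ 2 * (n : ℝ) ^ 2) ≤ lam := by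
    have : 4 / ((d : ℝ) ^ 2 * (n : ℝ) ^ 2) ≤ 2 / C := by
      rw [div_le_div_iff₀ (by positivity) hC]
      linarith
    linarith [div_eq_mul_inv 2 C]
  refine ⟨?_, hbound⟩
  calc (1 + lam)⁻¹ ≤ (4 / ((d : ℝ) ^ 2 * (n : ℝ) ^ 2))⁻¹ :=
        inv_anti₀ (by positivity) (by linarith)
    _ = 1 / 4 * (d : ℝ) ^ 2 * (n : ℝ) ^ 2 := by rw [inv_div]; ring

/-- For `n ≥ 4` and `1 ≤ d ≤ n-1`, the smallest eigenvalue
`λ_{N-1}` of the switch chain on `Ω_{n,d}` satisfies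
`(1 + λ_{N-1})⁻¹ ≤ (1/4) d² n²`, i.e. `λ_{N-1} ≥ -1 + 4/(d²n²)`.
Since `λ_{N-1}` is the least eigenvalue, this is stated for every real
eigenvalue `λ` of the transition matrix. -/
theorem switch_chain_smallest_eigenvalue (n d : ℕ) (hn : 4 ≤ n)
    (hd1 : 1 ≤ d) (hd2 : d ≤ n - 1) (lam : ℝ)
    (hlam : ∃ ψ : Omega n d → ℝ, ψ ≠ 0 ∧ (switchP n d).mulVec ψ = lam • ψ) :
    (1 + lam)⁻¹ ≤ (1 / 4) * (d : ℝ) ^ 2 * (n : ℝ) ^ 2 ∧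
      -1 + 4 / ((d : ℝ) ^ 2 * (n : ℝ) ^ 2) ≤ lam :=
  switch_chain_smallest_eigenvalue_general n d hn hd1 lam hlam
end
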